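/- arXiv:1410.6590 — 8 statements merged into one kernel-verified Lean document; each statement's English description precedes it below -/
import Mathlib

section
/- Let F be a finite subset of ℝ × ℝ and let Λ be a finite subset of the positive reals. Then the set S = { λ * (2 - x) : λ ∈ Λ, x ∈ ℝ, 0 ≤ x ≤ 1, and there exist (c,d) ∈ F and an integer m with m > d and x = (m - c)/(m - d) } satisfies ACC. (This is the computational core of Lemma 3(2) of the paper: there the codiscrepancy coefficient is α₀ = (m - 2 - a₁b₁ - ... - a_pb_p)/(m - a₁² - ... - a_p²) ∈ [0,1] with the aᵢ, bⱼ ranging over finite sets of reals and m a positive integer, and the minimal intersection numbers have the form λ(2 - α₀) with λ in a finite set of positive rationals.) -/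
/-!
For fixed `λ > 0` and `(c, d)`, the condition `x ≤ 1` forces `d ≤ c`, and then
`x = (m - c)/(m - d) = 1 - (c - d)/(m - d)` is nondecreasing in the integer `m > d`, so
`λ * (2 - x)` is nonincreasing in `m`. Integers bounded below are well-ordered, hence every
sequence of such values has a pair `i < j` with the `j`-th value at most the `i`-th one. This
property survives finite unions, which takes care of the finitely many `λ` and `(c, d)`.
-/

/-- A set `S ⊆ ℝ` satisfies the ascending chain condition: there is no strictly
increasing sequence of elements of `S`. -/
def SatisfiesACC (S : Set ℝ) : Prop :=
  ¬ ∃ f : ℕ → ℝ, StrictMono f ∧ ∀ n, f n ∈ S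

open Set

theorem SatisfiesACC.of_partiallyWellOrderedOn_ge {S : Set ℝ}
    (hS : S.PartiallyWellOrderedOn (· ≥ ·)) : SatisfiesACC S := by
  rintro ⟨f, hf, hfS⟩
  obtain ⟨i, j, hij, hji⟩ := hS.exists_lt hfS
  exact (hf hij).not_ge hji

theorem le_of_sub_div_sub_le_one {c d t : ℝ} (hdt : d < t) (h : (t - c) / (t - d) ≤ 1) :
    d ≤ c := by
  rw [div_le_one (sub_pos.2 hdt)] at h
  linarith

theorem monotoneOn_sub_div_sub {c d : ℝ} (hdc : d ≤ c) :
    MonotoneOn (fun t => (t - c) / (t - d)) (Ioi d) := by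
  intro a ha b hb hab
  rw [mem_Ioi] at ha hb
  dsimp only
  rw [div_le_div_iff₀ (sub_pos.2 ha) (sub_pos.2 hb)]
  nlinarith

theorem partiallyWellOrderedOn_ge_image_mul_two_sub {l c d : ℝ} (hl : 0 ≤ l) :
    ((fun m : ℤ => l * (2 - (m - c) / (m - d))) ''
      {m : ℤ | d < m ∧ (m - c) / (m - d) ≤ 1}).PartiallyWellOrderedOn (· ≥ ·) := by
  have hbdd : BddBelow {m : ℤ | d < m ∧ (m - c) / (m - d) ≤ 1} :=
    ⟨⌈d⌉, fun m hm => Int.ceil_le.2 hm.1.le⟩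
  refine hbdd.isWF.isPWO.image_of_monotone_on ?_
  rintro a ⟨hda, ha1⟩ b ⟨hdb, -⟩ hab
  have hdc := le_of_sub_div_sub_le_one hda ha1
  have hx := monotoneOn_sub_div_sub hdc (mem_Ioi.2 hda) (mem_Ioi.2 hdb)
    (Int.cast_le.2 hab)
  dsimp only at hx ⊢
  gcongr

/-- The computational core of Lemma 3(2): for a finite set `F ⊆ ℝ × ℝ` and a finite set
`Λ` of positive reals, the set of all numbers `λ * (2 - x)` with `λ ∈ Λ` and
`x = (m - c)/(m - d) ∈ [0,1]` for some `(c, d) ∈ F` and some integer `m > d`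
satisfies the ascending chain condition. -/
theorem acc_of_lambda_mul_two_sub (F : Finset (ℝ × ℝ)) (Λ : Finset ℝ)
    (hΛ : ∀ l ∈ Λ, 0 < l) :
    SatisfiesACC { y : ℝ | ∃ l ∈ Λ, ∃ x : ℝ, 0 ≤ x ∧ x ≤ 1 ∧
      (∃ p ∈ F, ∃ m : ℤ, p.2 < (m : ℝ) ∧ x = ((m : ℝ) - p.1) / ((m : ℝ) - p.2)) ∧
      y = l * (2 - x) } := by
  refine SatisfiesACC.of_partiallyWellOrderedOn_ge
    (PartiallyWellOrderedOn.mono (t := ⋃ l ∈ Λ, ⋃ p ∈ F,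
      (fun m : ℤ => l * (2 - (m - p.1) / (m - p.2))) ''
        {m : ℤ | p.2 < m ∧ (m - p.1) / (m - p.2) ≤ 1}) ?_ ?_)
  · simp only [Finset.partiallyWellOrderedOn_bUnion]
    exact fun l hl _ _ => partiallyWellOrderedOn_ge_image_mul_two_sub (hΛ l hl).le
  · rintro y ⟨l, hl, x, -, hx1, ⟨p, hp, m, hm, rfl⟩, rfl⟩
    exact mem_biUnion hl (mem_biUnion hp ⟨m, ⟨hm, hx1⟩, rfl⟩)
end

section
/- (Proposition A.1.1) Let b₁, b₂ ≥ 1 and r ≥ 0 be integers and let A be the 2 × 2 symmetric integer matrix with A 0 0 = -b₁, A 1 1 = -b₂ and A 0 1 = A 1 0 = r. Then A is an elliptic log canonical system if and only if one of the following holds: (1) r = 0; or (2) r = 1 and b₁ + b₂ > 2; or (3) r = 2, b₁ + b₂ > 4, b₁ ≥ 2 and b₂ ≥ 2. -/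
open Matrix

/-- A real matrix is negative definite: `xᵀ A x < 0` for every nonzero `x`. -/
def NegDefMat {V : Type*} [Fintype V] (A : Matrix V V ℝ) : Prop :=
  ∀ x : V → ℝ, x ≠ 0 → x ⬝ᵥ A.mulVec x < 0

/-- A real matrix is negative semidefinite: `xᵀ A x ≤ 0` for every `x`. -/
def NegSemidefMat {V : Type*} [Fintype V] (A : Matrix V V ℝ) : Prop :=
  ∀ x : V → ℝ, x ⬝ᵥ A.mulVec x ≤ 0

/-- A real symmetric matrix has at most one positive eigenvalue (with multiplicity). -/
def AtMostOnePosEig {V : Type*} [Fintype V] [DecidableEq V] (A : Matrix V V ℝ) : Prop :=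
  ∃ hA : A.IsHermitian, Fintype.card {i // 0 < hA.eigenvalues i} ≤ 1

/-- The real matrix associated to an integer matrix. -/
def matReal {V : Type*} (A : Matrix V V ℤ) : Matrix V V ℝ := A.map Int.cast

/-- An at most hyperbolic system of vectors, encoded by its Gram matrix. -/
def IsSystem {V : Type*} [Fintype V] [DecidableEq V] (A : Matrix V V ℤ) : Prop :=
  Nonempty V ∧ A.IsSymm ∧ (∀ i, A i i ≤ -1) ∧ (∀ i j, i ≠ j → 0 ≤ A i j) ∧
    AtMostOnePosEig (matReal A)

/-- The graph of a system: an edge between `i ≠ j` iff `A i j > 0`. -/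
def sysGraph {V : Type*} (A : Matrix V V ℤ) : SimpleGraph V :=
  SimpleGraph.fromRel fun i j => 0 < A i j

/-- The principal submatrix of `A` on a subset `s` of indices. -/
def subMat {V : Type*} (A : Matrix V V ℤ) (s : Finset V) :
    Matrix {i // i ∈ s} {i // i ∈ s} ℤ :=
  A.submatrix Subtype.val Subtype.val

/-- A system is elliptic if its Gram matrix is negative definite over `ℝ`. -/
def IsElliptic {V : Type*} [Fintype V] (A : Matrix V V ℤ) : Prop :=
  NegDefMat (matReal A)

/-- A system is hyperbolic if it is not negative semidefinite over `ℝ`. -/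
def IsHyperbolic {V : Type*} [Fintype V] (A : Matrix V V ℤ) : Prop :=
  ¬ NegSemidefMat (matReal A)

/-- A system is Lanner if it is hyperbolic but every proper subsystem
is negative semidefinite. -/
def IsLanner {V : Type*} [Fintype V] [DecidableEq V] (A : Matrix V V ℤ) : Prop :=
  IsHyperbolic A ∧ ∀ s : Finset V, s ≠ Finset.univ → NegSemidefMat (matReal (subMat A s))

/-- A system is connected parabolic if it is negative semidefinite but not negative
definite over `ℝ` and its graph is connected. -/
def IsConnParabolic {V : Type*} [Fintype V] (A : Matrix V V ℤ) : Prop :=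
  NegSemidefMat (matReal A) ∧ ¬ NegDefMat (matReal A) ∧ (sysGraph A).Connected

/-- A system is log canonical if for every subset `s` of indices whose principal
submatrix is negative definite, the canonical coefficients `α` (the unique solution of
`∑_{j ∈ s} A i j * α j = -A i i - 2` for `i ∈ s`) satisfy `α i ≥ -1` for all `i ∈ s`,
with strict inequality whenever `i` is joined, within the graph of `A` restricted to `s`,
to some `e ∈ s` with `A e e = -1`. -/
def IsLogCanonical {V : Type*} [Fintype V] [DecidableEq V] (A : Matrix V V ℤ) : Prop :=
  ∀ s : Finset V, NegDefMat (matReal (subMat A s)) →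
    ∀ α : V → ℝ, (∀ i ∈ s, ∑ j ∈ s, (A i j : ℝ) * α j = -(A i i : ℝ) - 2) →
      (∀ i ∈ s, -1 ≤ α i) ∧
      (∀ i e : {x // x ∈ s}, A e.val e.val = -1 →
        ((sysGraph A).comap (Subtype.val : {x // x ∈ s} → V)).Reachable i e →
        -1 < α i.val)

/-- An index `e` of the first kind (`A e e = -1`) is contractible if every other
index `i` satisfies `A i e = 0`, or `A i i ≤ -2` and `A i e = 1`. -/
def Contractible {V : Type*} (A : Matrix V V ℤ) (e : V) : Prop :=
  ∀ i, i ≠ e → A i e = 0 ∨ (A i i ≤ -2 ∧ A i e = 1)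

/-- A log canonical system is minimal if it contains no contractible element
of the first kind. -/
def IsMinimal {V : Type*} (A : Matrix V V ℤ) : Prop :=
  ¬ ∃ e, A e e = -1 ∧ Contractible A e

/-! A negative definite symmetric matrix has no positive eigenvalue, so for
`A = !![-b₁, r; r, -b₂]` everything reduces to ellipticity, which is `r² < b₁ b₂`, and to the
canonical coefficients. On a single index, `-b α = b - 2` gives `α = 2 / b - 1 > -1`. On both
indices, `β = α + 1` solves `A β = (r - 2, r - 2)`, whence
`(b₁ b₂ - r²) β₀ = (2 - r) (b₂ + r)` and `(b₁ b₂ - r²) β₁ = (2 - r) (b₁ + r)`: the coefficients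
are `≥ -1` iff `r ≤ 2`, and `> -1` iff `r < 2`. So `A` is log canonical iff `r ≤ 2` and, when
`r = 2` (both coefficients `-1`), no diagonal entry is `-1`. -/

open Finset

lemma NegDefMat.submatrix {V W : Type*} [Fintype V] [Fintype W] {M : Matrix V V ℝ}
    (hM : NegDefMat M) {e : W → V} (he : Function.Injective e) :
    NegDefMat (M.submatrix e e) := by
  intro x hx
  set y : V → ℝ := Function.extend e x 0
  have hy : ∀ i, y (e i) = x i := he.extend_apply x 0
  have hy0 : ∀ v ∉ Set.range e, y v = 0 := fun v hv => by
    simp [y, Function.extend_apply' _ _ _ (by simpa using hv)]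
  have hquad : x ⬝ᵥ (M.submatrix e e *ᵥ x) = y ⬝ᵥ (M *ᵥ y) := by
    simp only [dotProduct, mulVec, submatrix_apply]
    refine Fintype.sum_of_injective e he _ _ (fun v hv => by simp [hy0 v hv]) fun i => ?_
    rw [hy]
    congr 1
    exact Fintype.sum_of_injective e he _ _ (fun v hv => by simp [hy0 v hv]) fun j => by rw [hy]
  exact hquad ▸ hM y fun h => hx (funext fun i => by rw [← hy, h, Pi.zero_apply, Pi.zero_apply])

lemma NegDefMat.atMostOnePosEig {V : Type*} [Fintype V] [DecidableEq V] {M : Matrix V V ℝ}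
    (hherm : M.IsHermitian) (hM : NegDefMat M) : AtMostOnePosEig M := by
  refine ⟨hherm, ?_⟩
  suffices IsEmpty {i // 0 < hherm.eigenvalues i} by simp
  refine ⟨fun ⟨i, hi⟩ => hi.not_ge ?_⟩
  rw [hherm.eigenvalues_eq i]
  refine (hM _ fun h => hherm.eigenvectorBasis.orthonormal.ne_zero i ?_).le
  ext j
  exact congrFun h j

lemma negDefMat_fin_two_iff (a c d : ℝ) : NegDefMat !![a, c; c, d] ↔ a < 0 ∧ c * c < a * d := by
  have hquad : ∀ x : Fin 2 → ℝ, x ⬝ᵥ (!![a, c; c, d] *ᵥ x) =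
      a * x 0 ^ 2 + 2 * c * x 0 * x 1 + d * x 1 ^ 2 := fun x => by
    simp only [dotProduct, cons_mulVec, Fin.sum_univ_two, cons_val_zero, cons_val_one,
      cons_val_fin_one, empty_mulVec]
    ring
  simp only [NegDefMat, hquad]
  constructor
  · intro h
    have ha : a < 0 := by simpa using h ![1, 0] (by simp)
    refine ⟨ha, ?_⟩
    -- the form takes the value `a (a d - c²)` at `(c, -a)`
    have := h ![c, -a] (by simp [ha.ne])
    simp only [cons_val_zero, cons_val_one, mul_neg, even_two, Even.neg_pow] at this
    nlinarith
  · rintro ⟨ha, hD⟩ x hx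
    have hcompl : a * (a * x 0 ^ 2 + 2 * c * x 0 * x 1 + d * x 1 ^ 2) =
        (a * x 0 + c * x 1) ^ 2 + (a * d - c * c) * x 1 ^ 2 := by ring
    refine neg_of_mul_pos_right ?_ ha.le
    rw [hcompl]
    by_cases hx1 : x 1 = 0
    · have hx0 : x 0 ≠ 0 := fun hx0 => hx (funext fun i => by fin_cases i <;> simp [hx0, hx1])
      have ha0 := ha.ne
      simp only [hx1, mul_zero, add_zero, ne_eq, OfNat.ofNat_ne_zero, not_false_eq_true, zero_pow]
      positivity
    · exact add_pos_of_nonneg_of_pos (sq_nonneg _) (mul_pos (sub_pos.2 hD) (by positivity))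

lemma neg_one_le_iff_and_neg_one_lt_iff {D c r x : ℝ} (hD : 0 < D) (hc : 0 < c)
    (h : D * (x + 1) = (2 - r) * c) : (-1 ≤ x ↔ r ≤ 2) ∧ (-1 < x ↔ r < 2) := by
  rw [neg_le_iff_add_nonneg, neg_lt_iff_pos_add, ← mul_nonneg_iff_of_pos_left hD,
    ← mul_pos_iff_of_pos_left hD, h, mul_nonneg_iff_of_pos_right hc, mul_pos_iff_of_pos_right hc,
    sub_nonneg, sub_pos]
  exact ⟨.rfl, .rfl⟩

lemma Finset.fin_two_cases (s : Finset (Fin 2)) : s = ∅ ∨ s = {0} ∨ s = {1} ∨ s = univ := by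
  decide +revert

section LogCanonical

variable {V : Type*} {A : Matrix V V ℤ}

lemma neg_one_lt_canonicalCoeff_singleton {i : V} (hi : A i i < 0) {α : V → ℝ}
    (hα : ∀ k ∈ ({i} : Finset V), ∑ j ∈ {i}, (A k j : ℝ) * α j = -(A k k : ℝ) - 2) :
    -1 < α i := by
  have heq := hα i (mem_singleton_self i)
  rw [sum_singleton] at heq
  have hi' : (A i i : ℝ) < 0 := by exact_mod_cast hi
  nlinarith

variable [Fintype V] [DecidableEq V]

lemma IsLogCanonical.of_forall_neg_one_lt
    (h : ∀ s : Finset V, NegDefMat (matReal (subMat A s)) → ∀ α : V → ℝ,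
      (∀ i ∈ s, ∑ j ∈ s, (A i j : ℝ) * α j = -(A i i : ℝ) - 2) → ∀ i ∈ s, -1 < α i) :
    IsLogCanonical A := fun s hs α hα =>
  ⟨fun i hi => (h s hs α hα i hi).le, fun i _ _ _ => h s hs α hα i i.2⟩

lemma IsLogCanonical.of_forall_neg_one_le (hdiag : ∀ i, A i i ≠ -1)
    (h : ∀ s : Finset V, NegDefMat (matReal (subMat A s)) → ∀ α : V → ℝ,
      (∀ i ∈ s, ∑ j ∈ s, (A i j : ℝ) * α j = -(A i i : ℝ) - 2) → ∀ i ∈ s, -1 ≤ α i) :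
    IsLogCanonical A := fun s hs α hα =>
  ⟨h s hs α hα, fun _ e he _ => absurd he (hdiag e)⟩

lemma IsLogCanonical.canonicalCoeff_univ (hlc : IsLogCanonical A) (hA : IsElliptic A)
    {α : V → ℝ} (hα : ∀ i, ∑ j, (A i j : ℝ) * α j = -(A i i : ℝ) - 2) :
    (∀ i, -1 ≤ α i) ∧ ∀ i, A i i = -1 → -1 < α i := by
  obtain ⟨hle, hlt⟩ :=
    hlc univ (NegDefMat.submatrix hA Subtype.val_injective) α fun i _ => hα i
  exact ⟨fun i => hle i (mem_univ i),
    fun i hi => hlt ⟨i, mem_univ i⟩ ⟨i, mem_univ i⟩ hi (.refl _)⟩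

end LogCanonical

lemma matReal_fin_two (a b c d : ℤ) : matReal !![a, b; c, d] = !![(a : ℝ), b; c, d] := by
  ext i j; fin_cases i <;> fin_cases j <;> rfl

section FinTwo

variable {b₁ b₂ r : ℤ}

lemma isElliptic_fin_two_iff (hb₁ : 0 < b₁) :
    _root_.IsElliptic !![-b₁, r; r, -b₂] ↔ r * r < b₁ * b₂ := by
  rw [_root_.IsElliptic, matReal_fin_two, negDefMat_fin_two_iff]
  push_cast
  rw [neg_mul_neg]
  exact ⟨fun h => by exact_mod_cast h.2, fun h => ⟨by simpa using hb₁, by exact_mod_cast h⟩⟩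

lemma isSystem_fin_two (hb₁ : 1 ≤ b₁) (hb₂ : 1 ≤ b₂) (hr : 0 ≤ r)
    (hA : _root_.IsElliptic !![-b₁, r; r, -b₂]) : IsSystem !![-b₁, r; r, -b₂] := by
  have hsymm : (!![-b₁, r; r, -b₂]).IsSymm := by
    apply IsSymm.ext; intro i j; fin_cases i <;> fin_cases j <;> rfl
  refine ⟨inferInstance, hsymm, fun i => ?_, fun i j hij => ?_, hA.atMostOnePosEig ?_⟩
  · fin_cases i
    exacts [show -b₁ ≤ -1 by omega, show -b₂ ≤ -1 by omega]
  · fin_cases i <;> fin_cases j <;> simp_all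
  · exact isHermitian_iff_isSymm.2 (hsymm.map _)

lemma canonicalEqs_fin_two_iff (hD : r * r < b₁ * b₂) {α : Fin 2 → ℝ} :
    (∀ i, ∑ j, (!![-b₁, r; r, -b₂] i j : ℝ) * α j = -(!![-b₁, r; r, -b₂] i i : ℝ) - 2) ↔
      (b₁ * b₂ - r * r : ℝ) * (α 0 + 1) = (2 - r) * (b₂ + r) ∧
      (b₁ * b₂ - r * r : ℝ) * (α 1 + 1) = (2 - r) * (b₁ + r) := by
  have hD' : (b₁ * b₂ - r * r : ℝ) ≠ 0 := sub_ne_zero.2 (by exact_mod_cast hD.ne')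
  simp only [of_apply, cons_val', cons_val_fin_one, Fin.sum_univ_two, cons_val_zero, cons_val_one,
    Fin.forall_fin_two, Int.cast_neg, neg_mul, neg_neg]
  constructor
  · rintro ⟨h₀, h₁⟩
    exact ⟨by linear_combination -((b₂ : ℝ) * h₀ + r * h₁),
      by linear_combination -((r : ℝ) * h₀ + b₁ * h₁)⟩
  · rintro ⟨h₀, h₁⟩
    refine ⟨mul_left_cancel₀ hD' ?_, mul_left_cancel₀ hD' ?_⟩
    · linear_combination -(b₁ : ℝ) * h₀ + r * h₁
    · linear_combination (r : ℝ) * h₀ - b₂ * h₁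

lemma exists_canonicalCoeff_fin_two (hD : r * r < b₁ * b₂) : ∃ α : Fin 2 → ℝ,
    ∀ i, ∑ j, (!![-b₁, r; r, -b₂] i j : ℝ) * α j = -(!![-b₁, r; r, -b₂] i i : ℝ) - 2 := by
  have hD' : (b₁ * b₂ - r * r : ℝ) ≠ 0 := sub_ne_zero.2 (by exact_mod_cast hD.ne')
  exact ⟨![(2 - r) * (b₂ + r) / (b₁ * b₂ - r * r) - 1, (2 - r) * (b₁ + r) / (b₁ * b₂ - r * r) - 1],
    (canonicalEqs_fin_two_iff hD).2
      ⟨by simp [mul_div_cancel₀ _ hD'], by simp [mul_div_cancel₀ _ hD']⟩⟩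

lemma canonicalCoeff_univ_fin_two (hb₁ : 1 ≤ b₁) (hb₂ : 1 ≤ b₂) (hr : 0 ≤ r)
    (hD : r * r < b₁ * b₂) {α : Fin 2 → ℝ}
    (hα : ∀ i, ∑ j, (!![-b₁, r; r, -b₂] i j : ℝ) * α j = -(!![-b₁, r; r, -b₂] i i : ℝ) - 2)
    (i : Fin 2) : (-1 ≤ α i ↔ r ≤ 2) ∧ (-1 < α i ↔ r < 2) := by
  obtain ⟨h₀, h₁⟩ := (canonicalEqs_fin_two_iff hD).1 hα
  have hDpos : (0 : ℝ) < b₁ * b₂ - r * r := sub_pos.2 (by exact_mod_cast hD)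
  have hb₁r : (0 : ℝ) < b₁ + r := by exact_mod_cast (by omega : 0 < b₁ + r)
  have hb₂r : (0 : ℝ) < b₂ + r := by exact_mod_cast (by omega : 0 < b₂ + r)
  have key : (-1 ≤ α i ↔ (r : ℝ) ≤ 2) ∧ (-1 < α i ↔ (r : ℝ) < 2) := by
    fin_cases i
    exacts [neg_one_le_iff_and_neg_one_lt_iff hDpos hb₂r h₀,
      neg_one_le_iff_and_neg_one_lt_iff hDpos hb₁r h₁]
  exact_mod_cast key

lemma canonicalCoeff_fin_two (hb₁ : 1 ≤ b₁) (hb₂ : 1 ≤ b₂) (hr : 0 ≤ r)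
    (hD : r * r < b₁ * b₂) {s : Finset (Fin 2)} {α : Fin 2 → ℝ}
    (hα : ∀ i ∈ s, ∑ j ∈ s, (!![-b₁, r; r, -b₂] i j : ℝ) * α j =
      -(!![-b₁, r; r, -b₂] i i : ℝ) - 2) {i : Fin 2} (hi : i ∈ s) :
    (r ≤ 2 → -1 ≤ α i) ∧ (r < 2 → -1 < α i) := by
  rcases s.fin_two_cases with rfl | rfl | rfl | rfl
  · simp at hi
  · rw [mem_singleton.1 hi]
    have := neg_one_lt_canonicalCoeff_singleton (show -b₁ < 0 by omega) hα
    exact ⟨fun _ => this.le, fun _ => this⟩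
  · rw [mem_singleton.1 hi]
    have := neg_one_lt_canonicalCoeff_singleton (show -b₂ < 0 by omega) hα
    exact ⟨fun _ => this.le, fun _ => this⟩
  · have key := canonicalCoeff_univ_fin_two hb₁ hb₂ hr hD (fun i => hα i (mem_univ i)) i
    exact ⟨key.1.2, key.2.2⟩

lemma isLogCanonical_fin_two_iff (hb₁ : 1 ≤ b₁) (hb₂ : 1 ≤ b₂) (hr : 0 ≤ r)
    (hD : r * r < b₁ * b₂) :
    IsLogCanonical !![-b₁, r; r, -b₂] ↔ r ≤ 2 ∧ (r = 2 → 2 ≤ b₁ ∧ 2 ≤ b₂) := by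
  constructor
  · intro hlc
    obtain ⟨α, hα⟩ := exists_canonicalCoeff_fin_two hD
    obtain ⟨hle, hlt⟩ := hlc.canonicalCoeff_univ ((isElliptic_fin_two_iff (by omega)).2 hD) hα
    have key := canonicalCoeff_univ_fin_two hb₁ hb₂ hr hD hα
    refine ⟨(key 0).1.1 (hle 0), ?_⟩
    rintro rfl
    constructor <;> by_contra! hb
    · exact lt_irrefl _ ((key 0).2.1 (hlt 0 (show -b₁ = -1 by omega)))
    · exact lt_irrefl _ ((key 1).2.1 (hlt 1 (show -b₂ = -1 by omega)))
  · rintro ⟨hr₂, hb⟩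
    rcases hr₂.lt_or_eq with hr₂' | rfl
    · exact IsLogCanonical.of_forall_neg_one_lt fun s _ α hα i hi =>
        (canonicalCoeff_fin_two hb₁ hb₂ hr hD hα hi).2 hr₂'
    · refine IsLogCanonical.of_forall_neg_one_le (fun i => ?_) fun s _ α hα i hi =>
        (canonicalCoeff_fin_two hb₁ hb₂ hr hD hα hi).1 hr₂
      obtain ⟨h₁, h₂⟩ := hb rfl
      fin_cases i
      exacts [show -b₁ ≠ -1 by omega, show -b₂ ≠ -1 by omega]

end FinTwo

lemma fin_two_conditions_iff {b₁ b₂ r : ℤ} (hb₁ : 1 ≤ b₁) (hb₂ : 1 ≤ b₂) (hr : 0 ≤ r) :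
    (r * r < b₁ * b₂ ∧ r ≤ 2 ∧ (r = 2 → 2 ≤ b₁ ∧ 2 ≤ b₂)) ↔
      (r = 0 ∨ (r = 1 ∧ 2 < b₁ + b₂) ∨ (r = 2 ∧ 4 < b₁ + b₂ ∧ 2 ≤ b₁ ∧ 2 ≤ b₂)) := by
  constructor
  · rintro ⟨hD, hr₂, hb⟩
    interval_cases r
    · exact .inl rfl
    · exact .inr (.inl ⟨rfl, by nlinarith⟩)
    · obtain ⟨h₁, h₂⟩ := hb rfl
      exact .inr (.inr ⟨rfl, by nlinarith, h₁, h₂⟩)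
  · rintro (rfl | ⟨rfl, h⟩ | ⟨rfl, h, h₁, h₂⟩)
    · exact ⟨by nlinarith, by norm_num, by norm_num⟩
    · exact ⟨by nlinarith, by norm_num, by norm_num⟩
    · exact ⟨by nlinarith, le_rfl, fun _ => ⟨h₁, h₂⟩⟩

/-- Proposition A.1.1: the 2×2 symmetric integer matrix with diagonal `-b₁, -b₂`
(`b₁, b₂ ≥ 1`) and off-diagonal entries `r ≥ 0` is an elliptic log canonical system
if and only if `r = 0`, or `r = 1` and `b₁ + b₂ > 2`, or `r = 2`, `b₁ + b₂ > 4`,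
`b₁ ≥ 2` and `b₂ ≥ 2`. -/
theorem elliptic_logCanonical_two_by_two (b₁ b₂ r : ℤ)
    (hb₁ : 1 ≤ b₁) (hb₂ : 1 ≤ b₂) (hr : 0 ≤ r)
    (A : Matrix (Fin 2) (Fin 2) ℤ) (hA : A = !![-b₁, r; r, -b₂]) :
    (IsSystem A ∧ _root_.IsElliptic A ∧ IsLogCanonical A) ↔
      (r = 0 ∨ (r = 1 ∧ 2 < b₁ + b₂) ∨ (r = 2 ∧ 4 < b₁ + b₂ ∧ 2 ≤ b₁ ∧ 2 ≤ b₂)) := by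
  subst hA
  rw [← fin_two_conditions_iff hb₁ hb₂ hr]
  constructor
  · rintro ⟨-, hell, hlc⟩
    have hD := (isElliptic_fin_two_iff (by omega)).1 hell
    exact ⟨hD, (isLogCanonical_fin_two_iff hb₁ hb₂ hr hD).1 hlc⟩
  · rintro ⟨hD, hlc⟩
    have hell := (isElliptic_fin_two_iff (by omega)).2 hD
    exact ⟨isSystem_fin_two hb₁ hb₂ hr hell, hell, (isLogCanonical_fin_two_iff hb₁ hb₂ hr hD).2 hlc⟩
end

section
/- (Corollary A.1.2) Let A be a log canonical system and let e be an index with A e e = -1. Then e is contractible (i.e., for every i ≠ e either A i e = 0, or A i i ≤ -2 and A i e = 1) if and only if for every index i ≠ e the 2 × 2 principal submatrix of A on {i, e} is negative definite over ℝ. -/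
open Matrix

/-!
Write `b = A i e`. Since `A e e = -1`, the form of the pair `{i, e}` is
`(A i i + b²) u² - (w - b u)²`, so the pair is elliptic iff `A i i + b² < 0`. Both patterns
allowed in a contractible element satisfy this. Conversely, with `b ≥ 0` it leaves only
`b = 0`, or `b = 1` and `A i i ≤ -2`, or `b ≥ 2`; the last case is excluded by log canonicity,
since the canonical coefficient `α i = -(A i i + b + 2) / (A i i + b²)` of the pair exceeds `-1`
only when `(b - 2)(b + 1) < 0`.
-/

open Finset

section PairSubmatrix

variable {V : Type*} [DecidableEq V] {i j : V}

lemma Finset.univ_subtype_pair :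
    (Finset.univ : Finset {v // v ∈ ({i, j} : Finset V)}) =
      {⟨i, mem_insert_self i {j}⟩, ⟨j, mem_insert_of_mem (mem_singleton_self j)⟩} := by
  ext ⟨v, hv⟩
  rcases mem_insert.mp hv with rfl | hv
  · simp
  · obtain rfl := mem_singleton.mp hv
    simp

lemma dotProduct_mulVec_submatrix_pair {R : Type*} [CommSemiring R] (M : Matrix V V R)
    (hij : i ≠ j) (y : {v // v ∈ ({i, j} : Finset V)} → R) :
    let u := y ⟨i, mem_insert_self i {j}⟩
    let w := y ⟨j, mem_insert_of_mem (mem_singleton_self j)⟩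
    y ⬝ᵥ (M.submatrix Subtype.val Subtype.val) *ᵥ y =
      M i i * u * u + M i j * u * w + M j i * w * u + M j j * w * w := by
  have hne : (⟨i, mem_insert_self i {j}⟩ : {v // v ∈ ({i, j} : Finset V)}) ≠
      ⟨j, mem_insert_of_mem (mem_singleton_self j)⟩ := fun h => hij (congrArg Subtype.val h)
  simp only [dotProduct, mulVec, submatrix_apply, univ_subtype_pair,
    sum_pair hne]
  ring

lemma negDefMat_submatrix_pair_iff (M : Matrix V V ℝ) (hij : i ≠ j) (hsymm : M j i = M i j)
    (hjj : M j j = -1) :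
    NegDefMat (M.submatrix Subtype.val Subtype.val : Matrix {v // v ∈ ({i, j} : Finset V)} _ ℝ) ↔
      M i i + M i j ^ 2 < 0 := by
  have hI : i ∈ ({i, j} : Finset V) := mem_insert_self i {j}
  have hJ : j ∈ ({i, j} : Finset V) := mem_insert_of_mem (mem_singleton_self j)
  constructor
  · intro hdef
    let y : {v // v ∈ ({i, j} : Finset V)} → ℝ := fun p => if p.val = i then 1 else M i j
    have hyi : y ⟨i, hI⟩ = 1 := if_pos rfl
    have hyj : y ⟨j, hJ⟩ = M i j := if_neg hij.symm
    have hy : y ≠ 0 := fun h => one_ne_zero (hyi.symm.trans (congrFun h _))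
    have hform := hdef y hy
    rw [dotProduct_mulVec_submatrix_pair M hij y] at hform
    simp only [hyi, hyj, hsymm, hjj] at hform
    linarith
  · intro hdet y hy
    rw [dotProduct_mulVec_submatrix_pair M hij y, hsymm, hjj]
    set u := y ⟨i, hI⟩
    set w := y ⟨j, hJ⟩
    have hsq : M i i * u * u + M i j * u * w + M i j * w * u + -1 * w * w =
        (M i i + M i j ^ 2) * u ^ 2 - (w - M i j * u) ^ 2 := by ring
    rw [hsq]
    by_cases hu : u = 0
    · have hw : w ≠ 0 := by
        rintro hw
        refine hy (funext fun ⟨v, hv⟩ => ?_)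
        rcases mem_insert.mp hv with rfl | hv
        · exact hu
        · obtain rfl := mem_singleton.mp hv
          exact hw
      simp only [hu]
      nlinarith [sq_pos_of_ne_zero hw]
    · nlinarith [mul_neg_of_neg_of_pos hdet (sq_pos_of_ne_zero hu), sq_nonneg (w - M i j * u)]

end PairSubmatrix

section LogCanonicalPair

variable {V : Type*} [DecidableEq V] {A : Matrix V V ℤ} {i e : V}

lemma negDefMat_subMat_pair_iff (hie : i ≠ e) (hsymm : A e i = A i e) (he : A e e = -1) :
    NegDefMat (matReal (subMat A {i, e})) ↔ A i i + A i e ^ 2 < 0 := by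
  have hreal : matReal (subMat A {i, e}) = (matReal A).submatrix Subtype.val Subtype.val := rfl
  rw [hreal, negDefMat_submatrix_pair_iff (matReal A) hie (by simp [matReal, hsymm])
    (by simp [matReal, he])]
  simp only [matReal, map_apply]
  exact_mod_cast Iff.rfl

lemma IsLogCanonical.lt_two_of_pair [Fintype V] (hlc : IsLogCanonical A) (hie : i ≠ e)
    (hsymm : A e i = A i e) (he : A e e = -1) (hpos : 0 < A i e)
    (hdef : NegDefMat (matReal (subMat A {i, e}))) : A i e < 2 := by
  have hI : i ∈ ({i, e} : Finset V) := mem_insert_self i {e}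
  have hE : e ∈ ({i, e} : Finset V) := mem_insert_of_mem (mem_singleton_self e)
  have hden : (A i i : ℝ) + (A i e : ℝ) ^ 2 < 0 := by
    exact_mod_cast (negDefMat_subMat_pair_iff hie hsymm he).mp hdef
  set t : ℝ := (-A i i - A i e - 2) / (A i i + (A i e : ℝ) ^ 2) with ht
  let α : V → ℝ := fun v => if v = i then t else A i e * t + 1
  have hαi : α i = t := if_pos rfl
  have hα : ∀ k ∈ ({i, e} : Finset V),
      ∑ l ∈ ({i, e} : Finset V), (A k l : ℝ) * α l = -(A k k : ℝ) - 2 := by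
    have hαe : α e = A i e * t + 1 := if_neg hie.symm
    have hcancel : t * (A i i + (A i e : ℝ) ^ 2) = -A i i - A i e - 2 :=
      div_mul_cancel₀ _ hden.ne
    intro k hk
    rw [sum_pair hie, hαi, hαe]
    rcases mem_insert.mp hk with rfl | hk
    · linear_combination hcancel
    · rw [mem_singleton.mp hk, he, hsymm]
      push_cast
      ring
  have hadj : ((sysGraph A).comap (Subtype.val : {x // x ∈ ({i, e} : Finset V)} → V)).Adj
      ⟨i, hI⟩ ⟨e, hE⟩ := by
    simp only [SimpleGraph.comap_adj, sysGraph, SimpleGraph.fromRel_adj]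
    exact ⟨hie, Or.inl hpos⟩
  have hgt : -1 < t := hαi ▸ (hlc {i, e} hdef α hα).2 ⟨i, hI⟩ ⟨e, hE⟩ he hadj.reachable
  rw [ht, lt_div_iff_of_neg hden] at hgt
  have hb : ((A i e : ℝ) - 2) * (A i e + 1) < 0 := by linarith
  have hb' : (A i e : ℝ) < 2 := by nlinarith [(Int.cast_pos (R := ℝ)).mpr hpos]
  exact_mod_cast hb'

end LogCanonicalPair

/-- Corollary A.1.2: in a log canonical system `A`, an element `e` of the first kind
(`A e e = -1`) is contractible if and only if for every index `i ≠ e` the `2 × 2`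
principal submatrix of `A` on `{i, e}` is negative definite over `ℝ`. -/
theorem contractible_iff_pairs_elliptic {V : Type*} [Fintype V] [DecidableEq V]
    (A : Matrix V V ℤ) (hsys : IsSystem A) (hlc : IsLogCanonical A)
    (e : V) (he : A e e = -1) :
    Contractible A e ↔
      ∀ i, i ≠ e → NegDefMat (matReal (subMat A {i, e})) := by
  obtain ⟨-, hsymm, hdiag, hoff, -⟩ := hsys
  have hpair : ∀ i, i ≠ e → (NegDefMat (matReal (subMat A {i, e})) ↔ A i i + A i e ^ 2 < 0) :=
    fun i hie => negDefMat_subMat_pair_iff hie (hsymm.apply i e) he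
  constructor
  · intro hc i hie
    rw [hpair i hie]
    rcases hc i hie with h | ⟨h, h'⟩
    · rw [h]
      linarith [hdiag i]
    · rw [h']; linarith
  · intro hdef i hie
    rcases (hoff i e hie).eq_or_lt with h0 | hpos
    · exact Or.inl h0.symm
    have hlt := hlc.lt_two_of_pair hie (hsymm.apply i e) he hpos (hdef i hie)
    have hform := (hpair i hie).mp (hdef i hie)
    have hb : A i e = 1 := by omega
    rw [hb] at hform
    exact Or.inr ⟨by linarith, hb⟩
end

section
/- (Corollary A.1.5, structural part) Let A be an elliptic log canonical system with graph Γ. Then: (i) A i j ≤ 2 for all i ≠ j; (ii) if A i j = 2 for some i ≠ j, then A i k = 0 and A j k = 0 for every k ∉ {i, j} (a double edge is an isolated connected component); (iii) every index i with A i i = -1 has at most two neighbours in Γ; (iv) if distinct vertices i₁, ..., i_k (k ≥ 3) form a cycle in Γ (consecutive vertices adjacent, cyclically), then for each t the only neighbours of i_t in Γ are its two cyclic neighbours (every cycle is an isolated connected component). -/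
open Matrix

/-!
For a subset `s` with negative definite principal submatrix let `β = α + 1`, `α` the canonical
coefficients. Log canonicity gives `β ≥ 0` on `s`, and `(Aβ)ᵢ = ∑_{j ∈ s, j ≠ i} A i j - 2`.
Negative definiteness rules out a nonzero `x ≥ 0` with `Ax ≥ 0` on `s`. Hence on a double edge
or a cycle, where every weighted degree is at least `2`, `β` vanishes: all degrees are exactly
`2` and no vertex has `A i i = -1`. Taking `x = β + eᵢ` excludes a vertex with `A i i = -1` and
three neighbours. If a vertex `e` is attached to such a double edge or cycle, the same argument
works when its total weight is at least `2`. When the weight is exactly `1`, the form is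
nonnegative at `β - eₑ`, so `β = eₑ` and `A e e = -1`, contradicting the strict inequality at the
neighbour of `e`.
-/

open Finset

section RealMatrix

variable {V : Type*} {B : Matrix V V ℝ}

theorem NegDefMat.eq_zero_of_form_nonneg [Fintype V] (hB : NegDefMat B) {s : Finset V}
    {x : V → ℝ} (h : 0 ≤ ∑ i ∈ s, x i * ∑ j ∈ s, B i j * x j) : ∀ i ∈ s, x i = 0 := by
  classical
  set y : V → ℝ := fun v => if v ∈ s then x v else 0 with hy
  have hform : y ⬝ᵥ B *ᵥ y = ∑ i ∈ s, x i * ∑ j ∈ s, B i j * x j := by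
    simp [hy, dotProduct, mulVec, ite_mul, mul_ite, sum_ite_mem]
  have hy0 : y = 0 := by
    by_contra hy0
    linarith [hB y hy0]
  intro i hi
  simpa [hy, hi] using congrFun hy0 i

theorem NegDefMat.eq_zero_of_nonneg_of_sum_mul_nonneg [Fintype V] (hB : NegDefMat B)
    {s : Finset V} {x : V → ℝ} (hx : ∀ i ∈ s, 0 ≤ x i)
    (hBx : ∀ i ∈ s, 0 ≤ ∑ j ∈ s, B i j * x j) : ∀ i ∈ s, x i = 0 :=
  hB.eq_zero_of_form_nonneg (sum_nonneg fun i hi => mul_nonneg (hx i hi) (hBx i hi))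

theorem NegDefMat.exists_mulVec_eq [Fintype V] [DecidableEq V] (hB : NegDefMat B)
    (g : V → ℝ) : ∃ x, B *ᵥ x = g := by
  have hinj : Function.Injective B.mulVec := fun x y hxy => by
    by_contra hne
    have := hB (x - y) (sub_ne_zero.mpr hne)
    rw [mulVec_sub, hxy, sub_self, dotProduct_zero] at this
    exact lt_irrefl 0 this
  exact mulVec_surjective_iff_isUnit.mpr (mulVec_injective_iff_isUnit.mp hinj) g

theorem one_le_of_colSum_nonpos [DecidableEq V] {T : Finset V} {e : V} {β : V → ℝ}
    (he : e ∉ T) (hβ : ∀ j ∈ T, 0 ≤ β j) (hcol : ∀ j ∈ T, ∑ i ∈ T, B i j ≤ 0)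
    (hpos : 0 < ∑ i ∈ T, B i e) (hrow : ∀ i ∈ T, ∑ j ∈ insert e T, B i j * β j = B i e) :
    1 ≤ β e := by
  have hsum : ∑ i ∈ T, B i e = (∑ i ∈ T, B i e) * β e + ∑ j ∈ T, (∑ i ∈ T, B i j) * β j :=
    calc ∑ i ∈ T, B i e = ∑ i ∈ T, ∑ j ∈ insert e T, B i j * β j := (sum_congr rfl hrow).symm
      _ = _ := by
        simp only [sum_insert he, sum_add_distrib, sum_mul]
        rw [sum_comm]
  have hcore : ∑ j ∈ T, (∑ i ∈ T, B i j) * β j ≤ 0 :=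
    sum_nonpos fun j hj => mul_nonpos_of_nonpos_of_nonneg (hcol j hj) (hβ j hj)
  nlinarith

/-- `β - eₑ` is annihilated by the rows of `T`, so its form is `(β e - 1) (-1 - B e e) ≥ 0`. -/
theorem NegDefMat.diag_eq_neg_one_of_sum_mul_eq_col [Fintype V] [DecidableEq V]
    (hB : NegDefMat B) {T : Finset V} {e : V} {β : V → ℝ} (he : e ∉ T) (hβe : 1 ≤ β e)
    (hee : B e e ≤ -1) (hrow : ∀ i ∈ T, ∑ j ∈ insert e T, B i j * β j = B i e)
    (hrow_e : ∑ j ∈ insert e T, B e j * β j = -1) :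
    B e e = -1 ∧ ∀ i ∈ T, β i = 0 := by
  set x : V → ℝ := fun j => β j - if j = e then 1 else 0 with hx
  have hBx : ∀ i, ∑ j ∈ insert e T, B i j * x j = ∑ j ∈ insert e T, B i j * β j - B i e := by
    intro i
    simp [hx, mul_sub, sum_sub_distrib]
  have hform : ∑ i ∈ insert e T, x i * ∑ j ∈ insert e T, B i j * x j
      = (β e - 1) * (-1 - B e e) := by
    have hT : ∑ i ∈ T, x i * ∑ j ∈ insert e T, B i j * x j = 0 :=
      sum_eq_zero fun i hi => by rw [hBx, hrow i hi, sub_self, mul_zero]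
    rw [sum_insert he, hT, hBx, hrow_e]
    simp [hx]
  have hx0 := hB.eq_zero_of_form_nonneg (hform ▸ mul_nonneg (by linarith) (by linarith))
  refine ⟨?_, fun i hi => ?_⟩
  · have h := hBx e
    rw [hrow_e, sum_eq_zero fun j hj => by rw [hx0 j hj, mul_zero]] at h
    linarith
  · simpa [hx, ne_of_mem_of_not_mem hi he] using hx0 i (mem_insert_of_mem hi)

end RealMatrix

theorem ZMod.add_one_ne_and_sub_one_ne {k : ℕ} (hk : 3 ≤ k) (t : ZMod k) :
    t + 1 ≠ t ∧ t - 1 ≠ t ∧ t + 1 ≠ t - 1 := by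
  have hne : ∀ n : ℕ, 0 < n → n < k → (n : ZMod k) ≠ 0 := fun n hn hnk h =>
    absurd (Nat.le_of_dvd hn ((ZMod.natCast_eq_zero_iff n k).mp h)) (by omega)
  have h1 : (1 : ZMod k) ≠ 0 := by exact_mod_cast hne 1 one_pos (by omega)
  have h2 : (2 : ZMod k) ≠ 0 := by exact_mod_cast hne 2 two_pos (by omega)
  refine ⟨fun h => h1 ?_, fun h => h1 ?_, fun h => h2 ?_⟩
  · linear_combination h
  · linear_combination -h
  · linear_combination h

section System

variable {V : Type*} {A : Matrix V V ℤ}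

@[simp]
theorem matReal_apply (A : Matrix V V ℤ) (i j : V) : matReal A i j = A i j := rfl

theorem sysGraph_adj (hsymm : A.IsSymm) {i j : V} :
    (sysGraph A).Adj i j ↔ i ≠ j ∧ 0 < A i j := by
  simp [sysGraph, hsymm.apply i j]

theorem diag_add_sum_le_sum [DecidableEq V] (hoff : ∀ i j, i ≠ j → 0 ≤ A i j)
    {T U : Finset V} {j : V} (hj : j ∈ T) (hU : U ⊆ T.erase j) :
    A j j + ∑ l ∈ U, A j l ≤ ∑ l ∈ T, A j l := by
  rw [← add_sum_erase T _ hj]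
  linarith [sum_le_sum_of_subset_of_nonneg hU fun l hl _ => hoff j l (ne_of_mem_erase hl).symm]

theorem pos_sub_one_of_pos_add_one {k : ℕ} {c : ZMod k → V} (hsymm : A.IsSymm)
    (hcyc : ∀ t, 0 < A (c t) (c (t + 1))) (t : ZMod k) : 0 < A (c t) (c (t - 1)) := by
  rw [hsymm.apply (c (t - 1)) (c t)]
  simpa using hcyc (t - 1)

variable [Fintype V] [DecidableEq V]

theorem IsElliptic.negDefMat_subMat (hA : IsElliptic A) (s : Finset V) :
    NegDefMat (matReal (subMat A s)) := by
  intro x hx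
  set y : V → ℝ := fun v => if h : v ∈ s then x ⟨v, h⟩ else 0 with hy
  have hform : x ⬝ᵥ matReal (subMat A s) *ᵥ x
      = ∑ i ∈ s, y i * ∑ j ∈ s, matReal A i j * y j := by
    simp [hy, dotProduct, mulVec, subMat, ← sum_coe_sort s]
  have hyx : ∀ i : s, y i = x i := fun i => by simp [hy]
  by_contra h
  refine hx (funext fun i => ?_)
  rw [← hyx]
  exact NegDefMat.eq_zero_of_form_nonneg hA (hform ▸ not_lt.mp h) i i.2

/-- `β = α + 1`, for `α` the canonical coefficients of `s`. -/
theorem IsLogCanonical.exists_logDiscrepancy (hell : IsElliptic A) (hlc : IsLogCanonical A)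
    (s : Finset V) :
    ∃ β : V → ℝ,
      (∀ i ∈ s, ∑ j ∈ s, (A i j : ℝ) * β j = ((∑ j ∈ s, A i j - A i i - 2 : ℤ) : ℝ)) ∧
      (∀ i ∈ s, 0 ≤ β i) ∧ (∀ i ∈ s, A i i = -1 → 0 < β i) ∧
      (∀ i ∈ s, ∀ e ∈ s, i ≠ e → A e e = -1 → 0 < A i e → 0 < β i) := by
  have hs := hell.negDefMat_subMat s
  obtain ⟨α₀, hα₀⟩ := hs.exists_mulVec_eq fun i => -(A i i : ℝ) - 2
  set α : V → ℝ := fun v => if h : v ∈ s then α₀ ⟨v, h⟩ else 0 with hα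
  have hαrow : ∀ i ∈ s, ∑ j ∈ s, (A i j : ℝ) * α j = -(A i i : ℝ) - 2 := by
    intro i hi
    rw [← congrFun hα₀ ⟨i, hi⟩]
    simp [hα, mulVec, dotProduct, subMat, ← sum_coe_sort s]
  obtain ⟨hge, hgt⟩ := hlc s hs α hαrow
  refine ⟨fun j => α j + 1, fun i hi => ?_, fun i hi => by linarith [hge i hi],
    fun i hi hii => by linarith [hgt ⟨i, hi⟩ ⟨i, hi⟩ hii .rfl],
    fun i hi e he hie hee hpos => ?_⟩
  · push_cast
    simp only [mul_add, mul_one, sum_add_distrib, hαrow i hi]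
    ring
  · have hadj : (sysGraph A).Adj i e := by simp [sysGraph, hie, hpos]
    linarith [hgt ⟨i, hi⟩ ⟨e, he⟩ hee (SimpleGraph.Adj.reachable hadj)]

theorem IsLogCanonical.sum_eq_and_diag_le_of_le_sum (hdiag : ∀ i, A i i ≤ -1)
    (hell : IsElliptic A) (hlc : IsLogCanonical A) {T : Finset V}
    (hT : ∀ j ∈ T, A j j + 2 ≤ ∑ l ∈ T, A j l) :
    ∀ j ∈ T, ∑ l ∈ T, A j l = A j j + 2 ∧ A j j ≤ -2 := by
  obtain ⟨β, hrow, hβ0, hβdiag, -⟩ := hlc.exists_logDiscrepancy hell T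
  have hβ : ∀ j ∈ T, β j = 0 :=
    NegDefMat.eq_zero_of_nonneg_of_sum_mul_nonneg hell hβ0 fun j hj => by
      simp only [matReal_apply, hrow j hj]
      exact Int.cast_nonneg (by linarith [hT j hj])
  intro j hj
  have hzero : ((∑ l ∈ T, A j l - A j j - 2 : ℤ) : ℝ) = 0 := by
    rw [← hrow j hj]
    exact sum_eq_zero fun l hl => by rw [hβ l hl, mul_zero]
  refine ⟨by linarith [(Int.cast_eq_zero.mp hzero : ∑ l ∈ T, A j l - A j j - 2 = 0)], ?_⟩
  by_contra h
  linarith [hβdiag j hj (by linarith [hdiag j]), hβ j hj]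

theorem IsLogCanonical.diag_add_sum_le_one (hoff : ∀ i j, i ≠ j → 0 ≤ A i j)
    (hell : IsElliptic A) (hlc : IsLogCanonical A) {T : Finset V} {e : V} (he : e ∉ T)
    (hT : ∀ j ∈ T, 0 < A j e) : A e e + ∑ j ∈ T, A e j ≤ 1 := by
  obtain ⟨β, hrow, hβ0, -, -⟩ := hlc.exists_logDiscrepancy hell (insert e T)
  by_contra! h
  set x : V → ℝ := fun j => β j + if j = e then 1 else 0 with hx
  have hAx : ∀ i ∈ insert e T, ∑ j ∈ insert e T, (A i j : ℝ) * x j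
      = ((∑ j ∈ insert e T, A i j - A i i - 2 + A i e : ℤ) : ℝ) := by
    intro i hi
    simp [hx, mul_add, sum_add_distrib, hrow i hi]
  have hx0 := NegDefMat.eq_zero_of_nonneg_of_sum_mul_nonneg hell (s := insert e T) (x := x)
    (fun j hj => by simp only [hx]; split_ifs <;> linarith [hβ0 j hj])
    (fun i hi => by
      simp only [matReal_apply, hAx i hi]
      rw [sum_insert he]
      rcases mem_insert.mp hi with rfl | hi
      · exact Int.cast_nonneg (by omega)
      · have hdeg := diag_add_sum_le_sum hoff hi (empty_subset _)
        rw [sum_empty, add_zero] at hdeg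
        have := hT i hi
        exact Int.cast_nonneg (by omega))
  have := hx0 e (mem_insert_self e T)
  simp only [hx, if_true] at this
  linarith [hβ0 e (mem_insert_self e T)]

/-- `hT` says that all canonical coefficients of `T` equal `-1`. -/
theorem IsLogCanonical.exists_logDiscrepancy_insert (hell : IsElliptic A)
    (hlc : IsLogCanonical A) {T : Finset V} (hT : ∀ j ∈ T, ∑ l ∈ T, A j l = A j j + 2)
    {e : V} (he : e ∉ T) :
    ∃ β : V → ℝ, (∀ i ∈ insert e T, 0 ≤ β i) ∧
      (∀ j ∈ T, A e e = -1 → 0 < A j e → 0 < β j) ∧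
      (∀ j ∈ T, ∑ l ∈ insert e T, matReal A j l * β l = matReal A j e) ∧
      ∑ l ∈ insert e T, matReal A e l * β l = ((∑ l ∈ T, A e l - 2 : ℤ) : ℝ) := by
  obtain ⟨β, hrow, hβ0, -, hβadj⟩ := hlc.exists_logDiscrepancy hell (insert e T)
  refine ⟨β, hβ0, fun j hj => hβadj j (mem_insert_of_mem hj) e (mem_insert_self e T)
    (ne_of_mem_of_not_mem hj he), fun j hj => ?_, ?_⟩
  · simp only [matReal_apply, hrow j (mem_insert_of_mem hj), sum_insert he, hT j hj]
    push_cast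
    ring
  · simp only [matReal_apply, hrow e (mem_insert_self e T), sum_insert he]
    push_cast
    ring

theorem IsLogCanonical.sum_lt_two_of_sum_eq (hsymm : A.IsSymm)
    (hoff : ∀ i j, i ≠ j → 0 ≤ A i j) (hell : IsElliptic A) (hlc : IsLogCanonical A)
    {T : Finset V} (hT : ∀ j ∈ T, ∑ l ∈ T, A j l = A j j + 2) {e : V} (he : e ∉ T) :
    ∑ l ∈ T, A e l < 2 := by
  obtain ⟨β, hβ0, -, hrowT, hrowe⟩ := hlc.exists_logDiscrepancy_insert hell hT he
  by_contra! hW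
  have hβ := NegDefMat.eq_zero_of_nonneg_of_sum_mul_nonneg hell hβ0 fun i hi => by
    rcases mem_insert.mp hi with rfl | hi
    · rw [hrowe]
      exact Int.cast_nonneg (by omega)
    · rw [hrowT i hi, matReal_apply]
      exact Int.cast_nonneg (hoff i e (ne_of_mem_of_not_mem hi he))
  have hcol : ∀ j ∈ T, A e j = 0 := fun j hj => by
    have := hrowT j hj
    rw [sum_eq_zero fun l hl => by rw [hβ l hl, mul_zero], matReal_apply] at this
    rw [← hsymm.apply e j]
    exact_mod_cast this.symm
  rw [sum_eq_zero hcol] at hW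
  omega

theorem IsLogCanonical.sum_ne_one_of_sum_eq (hsymm : A.IsSymm) (hdiag : ∀ i, A i i ≤ -1)
    (hell : IsElliptic A) (hlc : IsLogCanonical A)
    {T : Finset V} (hT : ∀ j ∈ T, ∑ l ∈ T, A j l = A j j + 2) {e : V} (he : e ∉ T) :
    ∑ l ∈ T, A e l ≠ 1 := by
  intro hW
  have hTdiag := hlc.sum_eq_and_diag_le_of_le_sum hdiag hell fun j hj => (hT j hj).ge
  obtain ⟨β, hβ0, hβadj, hrowT, hrowe⟩ := hlc.exists_logDiscrepancy_insert hell hT he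
  have hβe : 1 ≤ β e := by
    refine one_le_of_colSum_nonpos he (fun j hj => hβ0 j (mem_insert_of_mem hj))
      (fun i hi => ?_) ?_ hrowT
    · simp only [matReal_apply]
      rw [← Int.cast_sum, ← sum_congr rfl fun l _ => hsymm.apply l i, hT i hi]
      exact_mod_cast (by linarith [(hTdiag i hi).2])
    · simp only [matReal_apply]
      rw [← Int.cast_sum, sum_congr rfl fun l _ => hsymm.apply e l, hW]
      norm_num
  obtain ⟨hee, hβT⟩ := NegDefMat.diag_eq_neg_one_of_sum_mul_eq_col hell he hβe
    (by rw [matReal_apply]; exact_mod_cast hdiag e) hrowT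
    (by rw [hrowe, hW]; norm_num)
  obtain ⟨j, hj, hej⟩ : ∃ j ∈ T, 0 < A e j := by
    by_contra! h
    linarith [sum_nonpos h]
  rw [matReal_apply] at hee
  linarith [hβT j hj, hβadj j hj (by exact_mod_cast hee) (by rwa [hsymm.apply e j])]

theorem IsLogCanonical.eq_zero_of_sum_eq (hsymm : A.IsSymm) (hdiag : ∀ i, A i i ≤ -1)
    (hoff : ∀ i j, i ≠ j → 0 ≤ A i j) (hell : IsElliptic A) (hlc : IsLogCanonical A)
    {T : Finset V} (hT : ∀ j ∈ T, ∑ l ∈ T, A j l = A j j + 2) {e : V} (he : e ∉ T) :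
    ∀ j ∈ T, A e j = 0 := by
  have hnonneg : ∀ j ∈ T, 0 ≤ A e j := fun j hj => hoff e j (ne_of_mem_of_not_mem hj he).symm
  have hW : ∑ l ∈ T, A e l = 0 := by
    have := hlc.sum_lt_two_of_sum_eq hsymm hoff hell hT he
    have := hlc.sum_ne_one_of_sum_eq hsymm hdiag hell hT he
    have := sum_nonneg hnonneg
    omega
  exact (sum_eq_zero_iff_of_nonneg hnonneg).mp hW

theorem IsLogCanonical.sum_pair_eq_of_two_le (hsymm : A.IsSymm) (hdiag : ∀ i, A i i ≤ -1)
    (hell : IsElliptic A) (hlc : IsLogCanonical A) {i j : V} (hij : i ≠ j) (h2 : 2 ≤ A i j) :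
    ∀ l ∈ ({i, j} : Finset V), ∑ m ∈ {i, j}, A l m = A l l + 2 := by
  refine fun l hl => (hlc.sum_eq_and_diag_le_of_le_sum hdiag hell (fun l hl => ?_) l hl).1
  rw [sum_pair hij]
  rcases mem_insert.mp hl with rfl | hl
  · omega
  · rw [mem_singleton.mp hl, hsymm.apply i j]
    omega

theorem IsLogCanonical.le_two (hsymm : A.IsSymm) (hdiag : ∀ i, A i i ≤ -1)
    (hell : IsElliptic A) (hlc : IsLogCanonical A) {i j : V} (hij : i ≠ j) : A i j ≤ 2 := by
  by_contra! h
  have := hlc.sum_pair_eq_of_two_le hsymm hdiag hell hij h.le i (mem_insert_self i {j})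
  rw [sum_pair hij] at this
  omega

theorem IsLogCanonical.eq_zero_of_eq_two (hsymm : A.IsSymm) (hdiag : ∀ i, A i i ≤ -1)
    (hoff : ∀ i j, i ≠ j → 0 ≤ A i j) (hell : IsElliptic A) (hlc : IsLogCanonical A)
    {i j : V} (hij : i ≠ j) (h2 : A i j = 2) {k : V} (hki : k ≠ i) (hkj : k ≠ j) :
    A i k = 0 ∧ A j k = 0 := by
  have h := hlc.eq_zero_of_sum_eq hsymm hdiag hoff hell
    (hlc.sum_pair_eq_of_two_le hsymm hdiag hell hij h2.ge) (e := k) (by simp [hki, hkj])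
  rw [← hsymm.apply i k, ← hsymm.apply j k]
  exact ⟨h i (mem_insert_self i {j}), h j (mem_insert_of_mem (mem_singleton_self j))⟩

theorem IsLogCanonical.ncard_neighborSet_le_two (hsymm : A.IsSymm)
    (hoff : ∀ i j, i ≠ j → 0 ≤ A i j) (hell : IsElliptic A) (hlc : IsLogCanonical A) {i : V}
    (hi : A i i = -1) : ((sysGraph A).neighborSet i).ncard ≤ 2 := by
  classical
  rw [Set.ncard_eq_toFinset_card']
  set T := ((sysGraph A).neighborSet i).toFinset with hTdef
  have hadj : ∀ j ∈ T, i ≠ j ∧ 0 < A i j := fun j hj =>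
    (sysGraph_adj hsymm).mp (by simpa [hTdef] using hj)
  have hle := hlc.diag_add_sum_le_one hoff hell (e := i) (T := T) (by simp [hTdef])
    fun j hj => by rw [hsymm.apply i j]; exact (hadj j hj).2
  have hcard : (T.card : ℤ) ≤ ∑ j ∈ T, A i j := by
    simpa using card_nsmul_le_sum T (A i) 1 fun j hj => (hadj j hj).2
  omega

theorem IsLogCanonical.sum_image_eq_of_cycle (hsymm : A.IsSymm) (hdiag : ∀ i, A i i ≤ -1)
    (hoff : ∀ i j, i ≠ j → 0 ≤ A i j) (hell : IsElliptic A) (hlc : IsLogCanonical A)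
    {k : ℕ} [NeZero k] {c : ZMod k → V} (hk : 3 ≤ k) (hc : Function.Injective c)
    (hcyc : ∀ t, 0 < A (c t) (c (t + 1))) :
    ∀ j ∈ univ.image c, ∑ l ∈ univ.image c, A j l = A j j + 2 := by
  refine fun j hj => (hlc.sum_eq_and_diag_le_of_le_sum hdiag hell (fun j hj => ?_) j hj).1
  obtain ⟨t, -, rfl⟩ := mem_image.mp hj
  obtain ⟨h1, h2, h3⟩ := ZMod.add_one_ne_and_sub_one_ne hk t
  have hdeg := diag_add_sum_le_sum hoff hj (U := {c (t + 1), c (t - 1)})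
    (by simp [insert_subset_iff, hc.ne h1, hc.ne h2])
  rw [sum_pair (hc.ne h3)] at hdeg
  linarith [hcyc t, pos_sub_one_of_pos_add_one hsymm hcyc t]

theorem IsLogCanonical.eq_or_eq_of_adj_cycle (hsymm : A.IsSymm) (hdiag : ∀ i, A i i ≤ -1)
    (hoff : ∀ i j, i ≠ j → 0 ≤ A i j) (hell : IsElliptic A) (hlc : IsLogCanonical A)
    {k : ℕ} {c : ZMod k → V} (hk : 3 ≤ k) (hc : Function.Injective c)
    (hcyc : ∀ t, (sysGraph A).Adj (c t) (c (t + 1))) {t : ZMod k} {v : V}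
    (hv : (sysGraph A).Adj (c t) v) : v = c (t - 1) ∨ v = c (t + 1) := by
  have : NeZero k := ⟨by omega⟩
  by_contra! hne
  obtain ⟨hct, hpos⟩ := (sysGraph_adj hsymm).mp hv
  have hcyc' : ∀ t, 0 < A (c t) (c (t + 1)) := fun t => ((sysGraph_adj hsymm).mp (hcyc t)).2
  have hT := hlc.sum_image_eq_of_cycle hsymm hdiag hoff hell hk hc hcyc'
  have ht : c t ∈ univ.image c := mem_image_of_mem c (mem_univ t)
  by_cases hvT : v ∈ univ.image c
  · obtain ⟨u, -, rfl⟩ := mem_image.mp hvT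
    obtain ⟨h1, h2, h3⟩ := ZMod.add_one_ne_and_sub_one_ne hk t
    have hdeg := diag_add_sum_le_sum hoff ht (U := {c u, c (t + 1), c (t - 1)})
      (by simp [insert_subset_iff, hc.ne h1, hc.ne h2, hct.symm])
    rw [hT _ ht, sum_insert (by simp [hne.1, hne.2]), sum_pair (hc.ne h3)] at hdeg
    linarith [hcyc' t, pos_sub_one_of_pos_add_one hsymm hcyc' t]
  · have := hlc.eq_zero_of_sum_eq hsymm hdiag hoff hell hT hvT (c t) ht
    rw [hsymm.apply] at this
    omega

end System

/-- Corollary A.1.5, structural part: in an elliptic log canonical system `A` with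
graph `Γ`: (i) off-diagonal entries are at most `2`; (ii) a double edge is an isolated
connected component; (iii) every vertex of weight `1` (i.e. `A i i = -1`) has at most
two neighbours; (iv) every cycle is an isolated connected component. -/
theorem elliptic_logCanonical_structure {V : Type*} [Fintype V] [DecidableEq V]
    (A : Matrix V V ℤ) (hsys : IsSystem A) (hell : IsElliptic A)
    (hlc : IsLogCanonical A) :
    (∀ i j, i ≠ j → A i j ≤ 2) ∧
    (∀ i j, i ≠ j → A i j = 2 → ∀ k, k ≠ i → k ≠ j → A i k = 0 ∧ A j k = 0) ∧
    (∀ i, A i i = -1 → ((sysGraph A).neighborSet i).ncard ≤ 2) ∧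
    (∀ k : ℕ, 3 ≤ k → ∀ c : ZMod k → V, Function.Injective c →
      (∀ t, (sysGraph A).Adj (c t) (c (t + 1))) →
      ∀ t, ∀ v, (sysGraph A).Adj (c t) v → v = c (t - 1) ∨ v = c (t + 1)) := by
  obtain ⟨-, hsymm, hdiag, hoff, -⟩ := hsys
  exact ⟨fun i j hij => hlc.le_two hsymm hdiag hell hij,
    fun i j hij h2 k hki hkj => hlc.eq_zero_of_eq_two hsymm hdiag hoff hell hij h2 hki hkj,
    fun i hi => hlc.ncard_neighborSet_le_two hsymm hoff hell hi,
    fun k hk c hc hcyc t v hv => hlc.eq_or_eq_of_adj_cycle hsymm hdiag hoff hell hk hc hcyc hv⟩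
end

section
/- Let A be an n × n real symmetric negative definite matrix with A i i < 0 for all i and A i j ≥ 0 for all i ≠ j. Then every entry of A⁻¹ is nonpositive: (A⁻¹) i j ≤ 0 for all i, j. -/
/-!
Let `x` be the `j`-th column of `A⁻¹`, so `A x = eⱼ ≥ 0`, and write `x = x⁺ - x⁻`. Pairing with `x⁺`
gives `x⁺ᵀ A x⁺ = x⁺ⱼ + x⁺ᵀ A x⁻ ≥ 0`: the last term is nonnegative because `x⁺` and `x⁻` have
disjoint supports, so only off-diagonal entries of `A` contribute. Negative definiteness then
forces `x⁺ = 0`, i.e. `x ≤ 0`.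
-/

open Matrix

theorem posPart_mul_negPart {R : Type*} [Ring R] [LinearOrder R] [IsOrderedRing R] (a : R) :
    a⁺ * a⁻ = 0 := by
  rcases le_total a 0 with ha | ha
  · simp [posPart_eq_zero.2 ha]
  · simp [negPart_eq_zero.2 ha]

namespace Matrix

theorem isUnit_det_of_dotProduct_mulVec_neg {n K : Type*} [Fintype n] [DecidableEq n] [Field K]
    [LinearOrder K] [IsStrictOrderedRing K] {A : Matrix n n K}
    (hneg : ∀ x : n → K, x ≠ 0 → x ⬝ᵥ A *ᵥ x < 0) : IsUnit A.det := by
  rw [isUnit_iff_ne_zero]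
  intro hdet
  obtain ⟨v, hv, hAv⟩ := exists_mulVec_eq_zero_iff.2 hdet
  simpa [hAv] using hneg v hv

variable {n R : Type*} [Fintype n] [CommRing R] [LinearOrder R] [IsStrictOrderedRing R]
  {A : Matrix n n R}

theorem dotProduct_mulVec_nonneg_of_disjoint (hoff : ∀ i j, i ≠ j → 0 ≤ A i j)
    {u v : n → R} (hu : 0 ≤ u) (hv : 0 ≤ v) (huv : ∀ k, u k * v k = 0) :
    0 ≤ u ⬝ᵥ A *ᵥ v := by
  refine Finset.sum_nonneg fun k _ => ?_
  rw [mulVec, dotProduct, Finset.mul_sum]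
  refine Finset.sum_nonneg fun l _ => ?_
  rcases eq_or_ne k l with rfl | hkl
  · rw [mul_left_comm, huv, mul_zero]
  · exact mul_nonneg (hu k) (mul_nonneg (hoff k l hkl) (hv l))

theorem nonpos_of_mulVec_nonneg (hneg : ∀ x : n → R, x ≠ 0 → x ⬝ᵥ A *ᵥ x < 0)
    (hoff : ∀ i j, i ≠ j → 0 ≤ A i j) {x : n → R} (hx : 0 ≤ A *ᵥ x) : x ≤ 0 := by
  have hsplit : x⁺ ⬝ᵥ A *ᵥ x = x⁺ ⬝ᵥ A *ᵥ x⁺ - x⁺ ⬝ᵥ A *ᵥ x⁻ := by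
    rw [← dotProduct_sub, ← mulVec_sub, posPart_sub_negPart]
  have hpair : 0 ≤ x⁺ ⬝ᵥ A *ᵥ x := dotProduct_nonneg_of_nonneg (posPart_nonneg x) hx
  have hcross : 0 ≤ x⁺ ⬝ᵥ A *ᵥ x⁻ := dotProduct_mulVec_nonneg_of_disjoint hoff
    (posPart_nonneg x) (negPart_nonneg x) fun k => posPart_mul_negPart (x k)
  refine posPart_eq_zero.1 (by_contra fun hpos => ?_)
  linarith [hneg _ hpos]

end Matrix

theorem inv_entries_nonpos_of_negDef_general {n : Type*} [Fintype n] [DecidableEq n]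
    (A : Matrix n n ℝ)
    (hneg : ∀ x : n → ℝ, x ≠ 0 → x ⬝ᵥ A.mulVec x < 0)
    (hoff : ∀ i j, i ≠ j → 0 ≤ A i j) :
    ∀ i j, A⁻¹ i j ≤ 0 := by
  intro i j
  have hcol : A *ᵥ (A⁻¹ *ᵥ Pi.single j 1) = Pi.single j 1 := by
    rw [mulVec_mulVec, mul_nonsing_inv A (isUnit_det_of_dotProduct_mulVec_neg hneg), one_mulVec]
  have hle := nonpos_of_mulVec_nonneg hneg hoff (hcol ▸ Pi.single_nonneg.2 zero_le_one)
  simpa [mulVec_single_one] using hle i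

/-- If `A` is a real symmetric negative definite matrix (`xᵀAx < 0` for every nonzero
`x`) with negative diagonal entries and nonnegative off-diagonal entries, then every
entry of `A⁻¹` is nonpositive. -/
theorem inv_entries_nonpos_of_negDef {n : Type*} [Fintype n] [DecidableEq n]
    (A : Matrix n n ℝ) (hsymm : A.IsSymm)
    (hneg : ∀ x : n → ℝ, x ≠ 0 → x ⬝ᵥ A.mulVec x < 0)
    (hdiag : ∀ i, A i i < 0) (hoff : ∀ i j, i ≠ j → 0 ≤ A i j) :
    ∀ i j, A⁻¹ i j ≤ 0 :=
  inv_entries_nonpos_of_negDef_general A hneg hoff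
end

section
/- If A is a Lanner system, then its graph (the simple graph on the index set with an edge between i ≠ j iff A i j > 0) is connected. -/
/-! If the graph of `A` were disconnected, a connected component `s` and its complement would
both be proper subsets, so the principal submatrices on them are negative semidefinite. Since
`A` has nonnegative off-diagonal entries, non-adjacency means `A v w = 0` between `s` and its
complement, so the quadratic form of `A` is the sum of the two restricted forms and hence
nonpositive, contradicting hyperbolicity. -/

open Matrix

open Finset

section QuadraticForm

variable {V : Type*}

lemma dotProduct_mulVec_self_eq_sum [Fintype V] (M : Matrix V V ℝ) (x : V → ℝ) :
    x ⬝ᵥ M *ᵥ x = ∑ v, ∑ w, x v * M v w * x w := by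
  simp [dotProduct, mulVec, mul_sum, mul_assoc]

lemma NegSemidefMat.sum_le_zero {M : Matrix V V ℝ} {s : Finset V}
    (h : NegSemidefMat (M.submatrix ((↑) : s → V) (↑))) (x : V → ℝ) :
    ∑ v ∈ s, ∑ w ∈ s, x v * M v w * x w ≤ 0 := by
  convert h fun v => x v using 1
  rw [dotProduct_mulVec_self_eq_sum, ← sum_coe_sort s]
  refine sum_congr rfl fun v _ => ?_
  rw [← sum_coe_sort s]
  rfl

lemma dotProduct_mulVec_self_eq_add_compl [Fintype V] [DecidableEq V] {M : Matrix V V ℝ}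
    {s : Finset V} (hM : ∀ v ∈ s, ∀ w ∉ s, M v w = 0 ∧ M w v = 0) (x : V → ℝ) :
    x ⬝ᵥ M *ᵥ x = ∑ v ∈ s, ∑ w ∈ s, x v * M v w * x w
      + ∑ v ∈ sᶜ, ∑ w ∈ sᶜ, x v * M v w * x w := by
  have inner_s : ∀ v ∈ s, ∑ w, x v * M v w * x w = ∑ w ∈ s, x v * M v w * x w := by
    intro v hv
    rw [← sum_add_sum_compl s, add_eq_left]
    exact sum_eq_zero fun w hw => by simp [(hM v hv w (mem_compl.1 hw)).1]
  have inner_compl :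
      ∀ v ∈ sᶜ, ∑ w, x v * M v w * x w = ∑ w ∈ sᶜ, x v * M v w * x w := by
    intro v hv
    rw [← sum_add_sum_compl s, add_eq_right]
    exact sum_eq_zero fun w hw => by simp [(hM w hw v (mem_compl.1 hv)).2]
  rw [dotProduct_mulVec_self_eq_sum, ← sum_add_sum_compl s, sum_congr rfl inner_s,
    sum_congr rfl inner_compl]

lemma negSemidefMat_of_blocks [Fintype V] [DecidableEq V] {M : Matrix V V ℝ} (s : Finset V)
    (hM : ∀ v ∈ s, ∀ w ∉ s, M v w = 0 ∧ M w v = 0)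
    (hs : NegSemidefMat (M.submatrix ((↑) : s → V) (↑)))
    (hsc : NegSemidefMat (M.submatrix ((↑) : (sᶜ : Finset V) → V) (↑))) :
    NegSemidefMat M := fun x => by
  rw [dotProduct_mulVec_self_eq_add_compl hM]
  linarith [hs.sum_le_zero x, hsc.sum_le_zero x]

end QuadraticForm

lemma eq_zero_of_not_sysGraph_adj {V : Type*} {A : Matrix V V ℤ}
    (hoff : ∀ i j, i ≠ j → 0 ≤ A i j) {v w : V} (hvw : v ≠ w)
    (h : ¬ (sysGraph A).Adj v w) : A v w = 0 := by
  rw [sysGraph, SimpleGraph.fromRel_adj] at h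
  exact le_antisymm (not_lt.1 fun hpos => h ⟨hvw, .inl hpos⟩) (hoff v w hvw)

lemma not_adj_of_reachable_of_not_reachable {V : Type*} {G : SimpleGraph V} {i v w : V}
    (hv : G.Reachable i v) (hw : ¬ G.Reachable i w) : ¬ G.Adj v w :=
  fun h => hw (hv.trans h.reachable)

/-- The graph of a Lanner system is connected. -/
theorem lanner_graph_connected {V : Type*} [Fintype V] [DecidableEq V]
    (A : Matrix V V ℤ) (hsys : IsSystem A) (hlan : IsLanner A) :
    (sysGraph A).Connected := by
  obtain ⟨hne, -, -, hoff, -⟩ := hsys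
  obtain ⟨hhyp, hsub⟩ := hlan
  refine (SimpleGraph.connected_iff _).2 ⟨fun i j => ?_, hne⟩
  by_contra hij
  classical
  set s := univ.filter ((sysGraph A).Reachable i)
  have hs : ∀ v, v ∈ s ↔ (sysGraph A).Reachable i v := by simp [s]
  have hblock : ∀ v ∈ s, ∀ w ∉ s, matReal A v w = 0 ∧ matReal A w v = 0 := by
    intro v hv w hw
    rw [hs] at hv hw
    have hvw : v ≠ w := by rintro rfl; exact hw hv
    have hadj := not_adj_of_reachable_of_not_reachable hv hw
    simp [matReal, eq_zero_of_not_sysGraph_adj hoff hvw hadj,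
      eq_zero_of_not_sysGraph_adj hoff hvw.symm (mt SimpleGraph.Adj.symm hadj)]
  refine hhyp (negSemidefMat_of_blocks s hblock (hsub s ?_) (hsub sᶜ ?_))
  · exact fun h => hij ((hs j).1 (h ▸ mem_univ j))
  · exact (compl_ne_univ_iff_nonempty s).2 ⟨i, (hs i).2 .rfl⟩
end

section
/- Let A be a system and let s₁, s₂ be disjoint nonempty subsets of the index set such that for each k ∈ {1,2} the principal submatrix of A on s_k is not negative semidefinite over ℝ while every proper principal submatrix of it is negative semidefinite (i.e. s₁ and s₂ induce Lanner subsystems). Then s₁ and s₂ are connected by an edge: there exist i ∈ s₁ and j ∈ s₂ with A i j ≥ 1. -/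
open Matrix

/-!
A real symmetric matrix `A` with at most one positive eigenvalue is negative semidefinite on
the hyperplane orthogonal to the eigenvector of that eigenvalue. Hence two `A`-orthogonal
vectors `x`, `y` cannot both have positive `A`-norm: a combination `a • x - b • y` lies in the
hyperplane, yet its `A`-norm is `a² Q(x) + b² Q(y) > 0`. If two Lanner subsystems were not
joined by an edge, the cross block of `A` between them would vanish, and vectors witnessing
their hyperbolicity, extended by zero, would be such a pair.
-/

namespace Matrix.IsHermitian

variable {n : Type*} [Fintype n] [DecidableEq n] {A : Matrix n n ℝ}

theorem dotProduct_mulVec_self_eq_sum_eigenvalues (hA : A.IsHermitian) (x : n → ℝ) :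
    x ⬝ᵥ A *ᵥ x = ∑ i, hA.eigenvalues i *
      ((star (hA.eigenvectorUnitary : Matrix n n ℝ)) *ᵥ x) i ^ 2 := by
  conv_lhs => rw [hA.spectral_theorem, Unitary.conjStarAlgAut_apply]
  rw [Matrix.mul_assoc, ← mulVec_mulVec, ← mulVec_mulVec, dotProduct_mulVec,
    ← mulVec_transpose]
  simp [star_eq_conjTranspose, dotProduct, mulVec_diagonal, sq, mul_left_comm]

theorem exists_forall_dotProduct_eq_zero_imp_nonpos (hA : A.IsHermitian)
    (hcard : Fintype.card {i // 0 < hA.eigenvalues i} ≤ 1) :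
    ∃ u : n → ℝ, ∀ v, u ⬝ᵥ v = 0 → v ⬝ᵥ A *ᵥ v ≤ 0 := by
  by_cases hpos : ∃ i₀, 0 < hA.eigenvalues i₀
  · obtain ⟨i₀, hi₀⟩ := hpos
    have hle : ∀ i, i ≠ i₀ → hA.eigenvalues i ≤ 0 := fun i hi => not_lt.mp fun h =>
      hi <| congrArg Subtype.val <| Fintype.card_le_one_iff.mp hcard ⟨i, h⟩ ⟨i₀, hi₀⟩
    refine ⟨fun j => star (hA.eigenvectorUnitary : Matrix n n ℝ) i₀ j, fun v hv => ?_⟩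
    rw [hA.dotProduct_mulVec_self_eq_sum_eigenvalues]
    refine Finset.sum_nonpos fun i _ => ?_
    rcases eq_or_ne i i₀ with rfl | hi
    · simp [show (star (hA.eigenvectorUnitary : Matrix n n ℝ) *ᵥ v) i = 0 from hv]
    · exact mul_nonpos_of_nonpos_of_nonneg (hle i hi) (sq_nonneg _)
  · push Not at hpos
    refine ⟨0, fun v _ => ?_⟩
    rw [hA.dotProduct_mulVec_self_eq_sum_eigenvalues]
    exact Finset.sum_nonpos fun i _ => mul_nonpos_of_nonpos_of_nonneg (hpos i) (sq_nonneg _)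

end Matrix.IsHermitian

theorem AtMostOnePosEig.dotProduct_mulVec_nonpos_of_orthogonal {n : Type*} [Fintype n]
    [DecidableEq n] {A : Matrix n n ℝ} (h : AtMostOnePosEig A) {x y : n → ℝ}
    (hx : 0 < x ⬝ᵥ A *ᵥ x) (hxy : x ⬝ᵥ A *ᵥ y = 0) : y ⬝ᵥ A *ᵥ y ≤ 0 := by
  obtain ⟨hA, hcard⟩ := h
  obtain ⟨u, hu⟩ := hA.exists_forall_dotProduct_eq_zero_imp_nonpos hcard
  by_contra! hy
  set a := u ⬝ᵥ y
  set b := u ⬝ᵥ x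
  have ha : a ≠ 0 := fun ha => hy.not_ge (hu y ha)
  have hyx : y ⬝ᵥ A *ᵥ x = 0 := by
    rwa [dotProduct_mulVec, ← mulVec_transpose, dotProduct_comm,
      ← conjTranspose_eq_transpose_of_trivial, hA.eq]
  have hz : u ⬝ᵥ (a • x - b • y) = 0 := by
    simp only [dotProduct_sub, dotProduct_smul, smul_eq_mul, a, b]
    ring
  have hQz : (a • x - b • y) ⬝ᵥ A *ᵥ (a • x - b • y) =
      a ^ 2 * (x ⬝ᵥ A *ᵥ x) + b ^ 2 * (y ⬝ᵥ A *ᵥ y) := by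
    simp only [mulVec_sub, mulVec_smul, dotProduct_sub, sub_dotProduct, smul_dotProduct,
      dotProduct_smul, smul_eq_mul, hxy, hyx]
    ring
  have hQz_nonpos := hQz ▸ hu _ hz
  nlinarith [sq_pos_of_ne_zero ha, sq_nonneg b]

theorem dotProduct_mulVec_extend_zero {ι κ V R : Type*} [Fintype ι] [Fintype κ] [Fintype V]
    [NonUnitalNonAssocSemiring R] {e : ι → V} {f : κ → V} (he : e.Injective)
    (hf : f.Injective) (M : Matrix V V R) (w : ι → R) (v : κ → R) :
    e.extend w 0 ⬝ᵥ M *ᵥ f.extend v 0 = w ⬝ᵥ M.submatrix e f *ᵥ v := by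
  simp only [dotProduct, mulVec, submatrix_apply]
  symm
  refine Fintype.sum_of_injective e he _ _ (fun b hb => ?_) fun a => ?_
  · simp [Function.extend_apply' _ _ _ (by simpa using hb)]
  rw [he.extend_apply]
  congr 1
  refine Fintype.sum_of_injective f hf _ _ (fun b hb => ?_) fun a => ?_
  · simp [Function.extend_apply' _ _ _ (by simpa using hb)]
  rw [hf.extend_apply]

theorem lanner_subsystems_joined_general {V : Type*} [Fintype V] [DecidableEq V]
    (A : Matrix V V ℤ) (hsys : IsSystem A)
    (s₁ s₂ : Finset V) (hdisj : Disjoint s₁ s₂)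
    (h₁ : ¬ NegSemidefMat (matReal (subMat A s₁)) ∧
      ∀ t : Finset V, t ⊂ s₁ → NegSemidefMat (matReal (subMat A t)))
    (h₂ : ¬ NegSemidefMat (matReal (subMat A s₂)) ∧
      ∀ t : Finset V, t ⊂ s₂ → NegSemidefMat (matReal (subMat A t))) :
    ∃ i ∈ s₁, ∃ j ∈ s₂, 1 ≤ A i j := by
  obtain ⟨-, -, -, hoff, hA⟩ := hsys
  by_contra! hcon
  have hcross : (matReal A).submatrix ((↑) : s₁ → V) ((↑) : s₂ → V) = 0 := by
    ext ⟨i, hi⟩ ⟨j, hj⟩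
    have := hoff i j (Finset.disjoint_left.mp hdisj hi <| · ▸ hj)
    have := hcon i hi j hj
    simp only [matReal, map_apply, submatrix_apply, Matrix.zero_apply, Int.cast_eq_zero]
    omega
  obtain ⟨w₁, hw₁⟩ := not_forall.mp h₁.1
  obtain ⟨w₂, hw₂⟩ := not_forall.mp h₂.1
  have he₁ := Subtype.val_injective (p := (· ∈ s₁))
  have he₂ := Subtype.val_injective (p := (· ∈ s₂))
  refine hw₂ ?_
  rw [matReal, subMat, ← Matrix.submatrix_map, ← dotProduct_mulVec_extend_zero he₂ he₂]
  refine hA.dotProduct_mulVec_nonpos_of_orthogonal ?_ ?_ (x := Subtype.val.extend w₁ 0)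
  · rwa [dotProduct_mulVec_extend_zero he₁ he₁, ← not_le]
  · rw [dotProduct_mulVec_extend_zero he₁ he₂, hcross, zero_mulVec, dotProduct_zero]

/-- Two disjoint Lanner subsystems of a system are connected by an edge: there are
`i ∈ s₁` and `j ∈ s₂` with `A i j ≥ 1`. -/
theorem lanner_subsystems_joined {V : Type*} [Fintype V] [DecidableEq V]
    (A : Matrix V V ℤ) (hsys : IsSystem A)
    (s₁ s₂ : Finset V) (hdisj : Disjoint s₁ s₂)
    (hne₁ : s₁.Nonempty) (hne₂ : s₂.Nonempty)
    (h₁ : ¬ NegSemidefMat (matReal (subMat A s₁)) ∧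
      ∀ t : Finset V, t ⊂ s₁ → NegSemidefMat (matReal (subMat A t)))
    (h₂ : ¬ NegSemidefMat (matReal (subMat A s₂)) ∧
      ∀ t : Finset V, t ⊂ s₂ → NegSemidefMat (matReal (subMat A t))) :
    ∃ i ∈ s₁, ∃ j ∈ s₂, 1 ≤ A i j :=
  lanner_subsystems_joined_general A hsys s₁ s₂ hdisj h₁ h₂
end

section
/- Let A be a Lanner system of size n and let s ⊊ Fin n be a nonempty proper subset. Then the principal submatrix A_s of A on s is either elliptic (negative definite over ℝ), or connected parabolic (negative semidefinite but not negative definite, with connected induced graph on s); and in the latter case s has exactly n - 1 elements. -/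
open Matrix

/-!
If `A_s` is not negative definite, a null vector `y` of the semidefinite form `A_s` may be
replaced by `|y|`, because the off-diagonal entries are nonnegative; this gives a nonnegative
null vector `x` of `A` supported in `s`. On any proper subset containing the support of `x` the
form is semidefinite, so `x` lies in the kernel of the corresponding rows. If the support had
fewer than `n - 1` elements, every row outside it would therefore vanish on it, and `A` would
split into two semidefinite blocks, contradicting hyperbolicity. So the support is `s` and
`|s| = n - 1`. If the graph of `A_s` were disconnected, the restriction of `x` to a component
would be a nonnegative null vector on a smaller proper subset, contradicting the same count.
-/

open Finset

section QuadraticForm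

variable {V : Type*} [Fintype V] {M : Matrix V V ℝ}

lemma dotProduct_mulVec_le_abs (hoff : ∀ i j, i ≠ j → 0 ≤ M i j) (x : V → ℝ) :
    x ⬝ᵥ M *ᵥ x ≤ |x| ⬝ᵥ M *ᵥ |x| := by
  simp only [dotProduct, mulVec, Finset.mul_sum, Pi.abs_apply]
  refine Finset.sum_le_sum fun i _ => Finset.sum_le_sum fun j _ => ?_
  rcases eq_or_ne i j with rfl | hij
  · exact le_of_eq (by linear_combination -(M i i) * abs_mul_abs_self (x i))
  · calc x i * (M i j * x j) ≤ |x i * (M i j * x j)| := le_abs_self _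
      _ = |x i| * (M i j * |x j|) := by rw [abs_mul, abs_mul, abs_of_nonneg (hoff i j hij)]

lemma mulVec_submatrix_apply_of_support {s : Finset V} {x : V → ℝ}
    (hx : ∀ i ∉ s, x i = 0) (i : s) :
    (M.submatrix Subtype.val Subtype.val *ᵥ fun j : s => x j) i = (M *ᵥ x) i := by
  simp only [mulVec, dotProduct, submatrix_apply]
  rw [Finset.sum_coe_sort s fun j => M i j * x j]
  exact Finset.sum_subset (subset_univ s) fun j _ hj => by rw [hx j hj, mul_zero]

lemma dotProduct_mulVec_submatrix_of_support {s : Finset V} {x : V → ℝ}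
    (hx : ∀ i ∉ s, x i = 0) :
    (fun j : s => x j) ⬝ᵥ M.submatrix Subtype.val Subtype.val *ᵥ (fun j : s => x j) =
      x ⬝ᵥ M *ᵥ x := by
  simp only [dotProduct, mulVec_submatrix_apply_of_support hx]
  rw [Finset.sum_coe_sort s fun j => x j * (M *ᵥ x) j]
  exact Finset.sum_subset (subset_univ s) fun j _ hj => by rw [hx j hj, zero_mul]

lemma dotProduct_mulVec_nonpos_of_support {s : Finset V}
    (hs : NegSemidefMat (M.submatrix (Subtype.val : s → V) Subtype.val)) {x : V → ℝ}
    (hx : ∀ i ∉ s, x i = 0) : x ⬝ᵥ M *ᵥ x ≤ 0 :=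
  dotProduct_mulVec_submatrix_of_support hx ▸ hs _

lemma NegSemidefMat.mulVec_eq_zero (hM : M.IsSymm) (hneg : NegSemidefMat M) {x : V → ℝ}
    (hx : x ⬝ᵥ M *ᵥ x = 0) : M *ᵥ x = 0 := by
  have hpos : (-M).PosSemidef := by
    refine posSemidef_iff_dotProduct_mulVec.mpr ⟨?_, fun y => ?_⟩
    · exact (isHermitian_iff_isSymm.2 hM).neg
    · simpa only [star_trivial, neg_mulVec, dotProduct_neg, neg_nonneg] using hneg y
  have := (hpos.dotProduct_mulVec_zero_iff x).1
    (by rw [star_trivial, neg_mulVec, dotProduct_neg, hx, neg_zero])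
  rwa [neg_mulVec, neg_eq_zero] at this

lemma mulVec_apply_eq_zero_of_support (hM : M.IsSymm) {s : Finset V}
    (hs : NegSemidefMat (M.submatrix (Subtype.val : s → V) Subtype.val)) {x : V → ℝ}
    (hx : ∀ i ∉ s, x i = 0) (hq : x ⬝ᵥ M *ᵥ x = 0) {i : V} (hi : i ∈ s) :
    (M *ᵥ x) i = 0 := by
  have hker := hs.mulVec_eq_zero (hM.submatrix _)
    ((dotProduct_mulVec_submatrix_of_support hx).trans hq)
  simpa only [mulVec_submatrix_apply_of_support hx, Pi.zero_apply] using congrFun hker ⟨i, hi⟩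

lemma apply_eq_zero_of_mulVec_apply_eq_zero (hoff : ∀ i j, i ≠ j → 0 ≤ M i j) {x : V → ℝ}
    (hnn : 0 ≤ x) {p : V} (hp : x p = 0) (hMx : (M *ᵥ x) p = 0) {j : V} (hj : x j ≠ 0) :
    M p j = 0 := by
  have hterm : ∀ k ∈ univ, 0 ≤ M p k * x k := fun k _ => by
    rcases eq_or_ne p k with rfl | hpk
    · rw [hp, mul_zero]
    · exact mul_nonneg (hoff p k hpk) (hnn k)
  have := (Finset.sum_eq_zero_iff_of_nonneg hterm).1 hMx j (mem_univ j)
  exact (mul_eq_zero.1 this).resolve_right hj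

lemma dotProduct_mulVec_eq_zero_of_block {c d : Finset V} (hcd : ∀ i ∈ c, ∀ j ∈ d, M i j = 0)
    {x y : V → ℝ} (hx : ∀ i ∉ c, x i = 0) (hy : ∀ j ∉ d, y j = 0) : x ⬝ᵥ M *ᵥ y = 0 := by
  simp only [dotProduct, mulVec, Finset.mul_sum]
  refine Finset.sum_eq_zero fun i _ => Finset.sum_eq_zero fun j _ => ?_
  by_cases hi : i ∈ c
  · by_cases hj : j ∈ d
    · rw [hcd i hi j hj, zero_mul, mul_zero]
    · rw [hy j hj, mul_zero, mul_zero]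
  · rw [hx i hi, zero_mul]

lemma dotProduct_mulVec_add_of_block (hM : M.IsSymm) {c d : Finset V}
    (hcd : ∀ i ∈ c, ∀ j ∈ d, M i j = 0) {x y : V → ℝ} (hx : ∀ i ∉ c, x i = 0)
    (hy : ∀ j ∉ d, y j = 0) :
    (x + y) ⬝ᵥ M *ᵥ (x + y) = x ⬝ᵥ M *ᵥ x + y ⬝ᵥ M *ᵥ y := by
  have hdc : ∀ j ∈ d, ∀ i ∈ c, M j i = 0 := fun j hj i hi => (hM.apply i j).symm ▸ hcd i hi j hj
  rw [mulVec_add, dotProduct_add, add_dotProduct, add_dotProduct,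
    dotProduct_mulVec_eq_zero_of_block hcd hx hy, dotProduct_mulVec_eq_zero_of_block hdc hy hx]
  ring

lemma negSemidefMat_of_block [DecidableEq V] (hM : M.IsSymm) {c : Finset V}
    (hc : ∀ i ∈ c, ∀ j ∈ cᶜ, M i j = 0)
    (hneg : NegSemidefMat (M.submatrix (Subtype.val : c → V) Subtype.val))
    (hneg' : NegSemidefMat (M.submatrix (Subtype.val : (cᶜ : Finset V) → V) Subtype.val)) :
    NegSemidefMat M := by
  intro x
  rw [← Set.indicator_self_add_compl c x]
  have hx : ∀ i ∉ c, (c : Set V).indicator x i = 0 := fun i hi =>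
    Set.indicator_of_notMem (by simpa using hi) x
  have hx' : ∀ i ∉ cᶜ, (c : Set V)ᶜ.indicator x i = 0 := fun i hi =>
    Set.indicator_of_notMem (by simpa using hi) x
  rw [dotProduct_mulVec_add_of_block hM hc hx hx']
  exact add_nonpos (dotProduct_mulVec_nonpos_of_support hneg hx)
    (dotProduct_mulVec_nonpos_of_support hneg' hx')

end QuadraticForm

section Lanner

variable {V : Type*} [Fintype V] [DecidableEq V] {M : Matrix V V ℝ}

lemma exists_nonneg_null_of_not_negDefMat (hoff : ∀ i j, i ≠ j → 0 ≤ M i j) {s : Finset V}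
    (hs : NegSemidefMat (M.submatrix (Subtype.val : s → V) Subtype.val))
    (hs' : ¬ NegDefMat (M.submatrix (Subtype.val : s → V) Subtype.val)) :
    ∃ x : V → ℝ, 0 ≤ x ∧ x ≠ 0 ∧ (∀ i ∉ s, x i = 0) ∧ x ⬝ᵥ M *ᵥ x = 0 := by
  obtain ⟨y, hy0, hy⟩ : ∃ y : s → ℝ, y ≠ 0 ∧
      0 ≤ y ⬝ᵥ M.submatrix Subtype.val Subtype.val *ᵥ y := by
    simpa [NegDefMat] using hs'
  have hoff' : ∀ i j : s, i ≠ j → 0 ≤ M.submatrix Subtype.val Subtype.val i j :=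
    fun i j hij => hoff i j (Subtype.val_injective.ne hij)
  have hq : |y| ⬝ᵥ M.submatrix Subtype.val Subtype.val *ᵥ |y| = 0 :=
    le_antisymm (hs _) (hy.trans (dotProduct_mulVec_le_abs hoff' y))
  let x : V → ℝ := fun i => if h : i ∈ s then |y ⟨i, h⟩| else 0
  have hsupp : ∀ i ∉ s, x i = 0 := fun i hi => dif_neg hi
  have hres : (fun j : s => x j) = |y| := funext fun j => by simp [x]
  refine ⟨x, fun i => ?_, fun h => hy0 (funext fun j => ?_), hsupp, ?_⟩
  · by_cases hi : i ∈ s <;> simp [x, hi]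
  · simpa [x] using congrFun h j
  · rw [← dotProduct_mulVec_submatrix_of_support hsupp, hres, hq]

lemma ne_zero_and_card_eq_of_nonneg_null (hM : M.IsSymm) (hoff : ∀ i j, i ≠ j → 0 ≤ M i j)
    (hhyp : ¬ NegSemidefMat M)
    (hproper : ∀ s : Finset V, s ≠ univ →
      NegSemidefMat (M.submatrix (Subtype.val : s → V) Subtype.val))
    {u : Finset V} (hu : u ≠ univ) {x : V → ℝ} (hnn : 0 ≤ x) (hx0 : x ≠ 0)
    (hsupp : ∀ i ∉ u, x i = 0) (hq : x ⬝ᵥ M *ᵥ x = 0) :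
    (∀ i ∈ u, x i ≠ 0) ∧ #u = Fintype.card V - 1 := by
  set t := univ.filter fun i => x i ≠ 0
  have hmem : ∀ i, i ∈ t ↔ x i ≠ 0 := by simp [t]
  have htsupp : ∀ i ∉ t, x i = 0 := fun i hi => not_not.1 (mt (hmem i).2 hi)
  have htu : t ⊆ u := fun i hi => by_contra fun hiu => (hmem i).1 hi (hsupp i hiu)
  have hcard_lt : ∀ w : Finset V, w ≠ univ → #w < Fintype.card V := fun w hw =>
    card_univ (α := V) ▸ card_lt_card (ssubset_univ_iff.2 hw)
  have ht : t ≠ univ := fun h => hu (univ_subset_iff.1 (h ▸ htu))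
  have htcard : #t = Fintype.card V - 1 := by
    by_contra htcard
    have hins : ∀ p, insert p t ≠ univ := fun p h => by
      have := card_insert_le p t
      rw [h, card_univ] at this
      have := hcard_lt t ht
      omega
    have hblock : ∀ i ∈ t, ∀ j ∈ tᶜ, M i j = 0 := by
      intro i hi j hj
      have hMx := mulVec_apply_eq_zero_of_support hM (hproper _ (hins j))
        (fun k hk => htsupp k fun h => hk (mem_insert_of_mem h)) hq (mem_insert_self j t)
      rw [← hM.apply i j]
      exact apply_eq_zero_of_mulVec_apply_eq_zero hoff hnn (htsupp j (mem_compl.1 hj)) hMx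
        ((hmem i).1 hi)
    have htc : tᶜ ≠ univ := fun h => hx0 (funext fun i =>
      htsupp i (by simp [(compl_eq_univ_iff t).1 h]))
    exact hhyp (negSemidefMat_of_block hM hblock (hproper t ht) (hproper tᶜ htc))
  have htu_eq : t = u := eq_of_subset_of_card_le htu (by have := hcard_lt u hu; omega)
  exact ⟨fun i hi => (hmem i).1 (htu_eq ▸ hi), htu_eq ▸ htcard⟩

lemma connected_of_nonneg_null (hM : M.IsSymm) (hoff : ∀ i j, i ≠ j → 0 ≤ M i j)
    (hhyp : ¬ NegSemidefMat M)
    (hproper : ∀ s : Finset V, s ≠ univ →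
      NegSemidefMat (M.submatrix (Subtype.val : s → V) Subtype.val))
    {s : Finset V} (hs : s ≠ univ) (hne : s.Nonempty) (G : SimpleGraph s)
    (hG : ∀ i j : s, i ≠ j → ¬ G.Adj i j → M i j = 0) {x : V → ℝ} (hnn : 0 ≤ x)
    (hfull : ∀ i ∈ s, x i ≠ 0) (hsupp : ∀ i ∉ s, x i = 0) (hq : x ⬝ᵥ M *ᵥ x = 0)
    (hcard : #s = Fintype.card V - 1) :
    G.Connected := by
  classical
  have : Nonempty s := hne.coe_sort
  refine (SimpleGraph.connected_iff G).2 ⟨fun a b => by_contra fun hab => ?_, this⟩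
  set c := s.filter fun j => ∃ h : j ∈ s, G.Reachable a ⟨j, h⟩
  have hcs : c ⊆ s := filter_subset _ _
  have hac : (a : V) ∈ c := mem_filter.2 ⟨a.2, a.2, SimpleGraph.Reachable.refl a⟩
  have hbc : (b : V) ∉ c := fun h => hab (mem_filter.1 h).2.2
  have hblock : ∀ i ∈ c, ∀ j ∈ s \ c, M i j = 0 := by
    intro i hi j hj
    obtain ⟨-, his, hri⟩ := mem_filter.1 hi
    obtain ⟨hjs, hjc⟩ := mem_sdiff.1 hj
    exact hG ⟨i, his⟩ ⟨j, hjs⟩ (fun h => hjc (Subtype.mk.inj h ▸ hi))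
      fun hadj => hjc (mem_filter.2 ⟨hjs, hjs, hri.trans hadj.reachable⟩)
  set x₁ := (c : Set V).indicator x
  set x₂ := (c : Set V)ᶜ.indicator x
  have h₁ : ∀ i ∉ c, x₁ i = 0 := fun i hi => Set.indicator_of_notMem (by simpa using hi) x
  have h₂ : ∀ i ∉ s \ c, x₂ i = 0 := fun i hi => by
    by_cases hic : i ∈ c
    · exact Set.indicator_of_notMem (by simpa using hic) x
    · exact (Set.indicator_of_mem (s := (c : Set V)ᶜ) (by simpa using hic) x).trans
        (hsupp i fun his => hi (mem_sdiff.2 ⟨his, hic⟩))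
  have hsplit := dotProduct_mulVec_add_of_block hM hblock h₁ h₂
  rw [Set.indicator_self_add_compl, hq] at hsplit
  have hq₁ : x₁ ⬝ᵥ M *ᵥ x₁ = 0 := by
    have := dotProduct_mulVec_nonpos_of_support (hproper s hs) fun i hi => h₁ i (mt (@hcs i) hi)
    have := dotProduct_mulVec_nonpos_of_support (hproper s hs)
      fun i hi => h₂ i (mt (fun h => (mem_sdiff.1 h).1) hi)
    linarith
  have hc : c ≠ univ := fun h => hs (univ_subset_iff.1 (h ▸ hcs))
  have hx₁0 : x₁ ≠ 0 := fun h => hfull a a.2 (by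
    simpa [x₁, Set.indicator_of_mem (show (a : V) ∈ (c : Set V) from hac)] using congrFun h a)
  obtain ⟨-, hcard_c⟩ := ne_zero_and_card_eq_of_nonneg_null hM hoff hhyp hproper hc
    (fun i => Set.indicator_nonneg (fun j _ => hnn j) i) hx₁0 h₁ hq₁
  have := card_lt_card (Finset.ssubset_iff_subset_ne.2 ⟨hcs, fun h => hbc (by rw [h]; exact b.2)⟩)
  omega

end Lanner

lemma eq_zero_of_not_adj_sysGraph {V : Type*} {A : Matrix V V ℤ}
    (hoff : ∀ i j, i ≠ j → 0 ≤ A i j) {i j : V} (hij : i ≠ j) (h : ¬ (sysGraph A).Adj i j) :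
    A i j = 0 := by
  simp only [sysGraph, SimpleGraph.fromRel_adj, not_and, not_or, not_lt] at h
  exact le_antisymm (h hij).1 (hoff i j hij)

/-- A proper subsystem of a Lanner system of size `n` is either elliptic or connected
parabolic, and in the latter case it has exactly `n - 1` elements. -/
theorem lanner_proper_subsystem_dichotomy {n : ℕ}
    (A : Matrix (Fin n) (Fin n) ℤ) (hsys : IsSystem A) (hlan : IsLanner A)
    (s : Finset (Fin n)) (hne : s.Nonempty) (hproper : s ≠ Finset.univ) :
    NegDefMat (matReal (subMat A s)) ∨
      (NegSemidefMat (matReal (subMat A s)) ∧ ¬ NegDefMat (matReal (subMat A s)) ∧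
        (sysGraph (subMat A s)).Connected ∧ s.card = n - 1) := by
  obtain ⟨-, hsymm, -, hoff, -⟩ := hsys
  have hMsymm : (matReal A).IsSymm := hsymm.map _
  have hMoff : ∀ i j, i ≠ j → 0 ≤ matReal A i j := fun i j hij => Int.cast_nonneg (hoff i j hij)
  by_cases hdef : NegDefMat (matReal (subMat A s))
  · exact Or.inl hdef
  obtain ⟨x, hnn, hx0, hsupp, hq⟩ :=
    exists_nonneg_null_of_not_negDefMat hMoff (hlan.2 s hproper) hdef
  obtain ⟨hfull, hcard⟩ :=
    ne_zero_and_card_eq_of_nonneg_null hMsymm hMoff hlan.1 hlan.2 hproper hnn hx0 hsupp hq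
  have hG : ∀ i j : s, i ≠ j → ¬ (sysGraph (subMat A s)).Adj i j → matReal A i j = 0 :=
    fun i j hij hadj => by
      have : subMat A s i j = 0 := eq_zero_of_not_adj_sysGraph
        (fun _ _ hij => hoff _ _ (Subtype.val_injective.ne hij)) hij hadj
      exact (congrArg (Int.cast : ℤ → ℝ) this).trans Int.cast_zero
  refine Or.inr ⟨hlan.2 s hproper, hdef, ?_, by simpa using hcard⟩
  exact connected_of_nonneg_null hMsymm hMoff hlan.1 hlan.2 hproper hne _ hG hnn hfull hsupp hq
    hcard
end
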